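/- arXiv:1603.08699 — 11 statements merged into one kernel-verified Lean document; each statement's English description precedes it below -/
import Mathlib

section
/- Assuming 𝔭 = 𝔠, if an ideal I on ℕ has no basis of cardinality less than 𝔭, then I fails property (□): there exists a complete metric space X (one may take X = ℝ) and a monotone family {X_A : A ∈ I} of meager subsets of X (X_A ⊆ X_B whenever A ⊆ B) whose union is all of X. -/
open scoped ENNReal Cardinal

/-- An ideal on ℕ containing all finite sets, closed under subsets and finite
unions, with `ℕ ∉ I`. -/
def IsIdealOn (I : Set (Set ℕ)) : Prop :=
  Set.univ ∉ I ∧ (∀ A ∈ I, ∀ B, B ⊆ A → B ∈ I) ∧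
    (∀ A ∈ I, ∀ B ∈ I, A ∪ B ∈ I) ∧ (∀ A : Set ℕ, A.Finite → A ∈ I)

/-- `β` is a basis of the ideal `I`: a cofinal (under inclusion) subfamily. -/
def IsIdealBasis (I β : Set (Set ℕ)) : Prop := β ⊆ I ∧ ∀ A ∈ I, ∃ B ∈ β, A ⊆ B

/-- `I` is a Baire ideal for the topological space `X`: for every monotone family of
nowhere dense subsets of `X` indexed by `I`, the union is not all of `X`. -/
def IsBaireIdealFor (I : Set (Set ℕ)) (X : Type*) [TopologicalSpace X] : Prop :=
  ∀ f : Set ℕ → Set X, (∀ A ∈ I, IsNowhereDense (f A)) →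
    (∀ A ∈ I, ∀ B ∈ I, A ⊆ B → f A ⊆ f B) → (⋃ A ∈ I, f A) ≠ Set.univ

/-- The pseudointersection number 𝔭: the least cardinality of a family of subsets of ℕ
with the strong finite intersection property but no infinite pseudointersection. -/
noncomputable def pseudoNum : Cardinal :=
  sInf {c : Cardinal | ∃ 𝒜 : Set (Set ℕ), Cardinal.mk 𝒜 = c ∧
    (∀ F : Finset (Set ℕ), ↑F ⊆ 𝒜 → (⋂ A ∈ F, A).Infinite) ∧
    ¬ ∃ B : Set ℕ, B.Infinite ∧ ∀ A ∈ 𝒜, (B \ A).Finite}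

/-!
Sets of fewer than `𝔭` points of a second-countable T1 space without isolated points are meagre.
Code a finite family of open sets by a list `s` of indices into a countable basis `b`, the `k`-th
set `b s[k]` lying inside `b k`. For `x ∈ S` the codes avoiding `x`, and for each `n` the codes of
length `≥ n`, form fewer than `𝔭` sets with the strong finite intersection property, so they have
a pseudointersection `B`. Removing any finite `t` from `B` still leaves arbitrarily long codes, so
the union of the sets coded by `B \ t` is dense open; the countable intersection of these unions
misses `S`, because every `x ∈ S` is avoided by all but finitely many codes in `B`.

For the ideal, enumerate `I` in order type `𝔠`. Since no initial segment is a basis, each index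
`j` carries some `C j ∈ I` contained in no earlier member, so `C j ⊆ S` forces `j ≤ S`. Along a
bijection `e : ℝ ≃ I`, the sets `{x | C (e x) ⊆ S}` are monotone in `S`, cover `ℝ`, and have
fewer than `𝔠 = 𝔭` points.
-/

open Set Cardinal Filter Topology TopologicalSpace

section Pseudointersection

variable {α : Type*}

def HasStrongFIP (𝒜 : Set (Set α)) : Prop :=
  ∀ F : Finset (Set α), ↑F ⊆ 𝒜 → (⋂ A ∈ F, A).Infinite

def IsPseudointersection (B : Set α) (𝒜 : Set (Set α)) : Prop :=
  B.Infinite ∧ ∀ A ∈ 𝒜, (B \ A).Finite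

theorem HasStrongFIP.image_equiv {β : Type*} {𝒜 : Set (Set α)} (h : HasStrongFIP 𝒜)
    (e : α ≃ β) : HasStrongFIP ((e '' ·) '' 𝒜) := by
  classical
  intro F hF
  obtain ⟨F', hF'𝒜, rfl⟩ := Finset.subset_set_image_iff.1 hF
  rw [Finset.set_biInter_finset_image, ← image_iInter₂ e.bijective]
  exact (h F' hF'𝒜).image e.injective.injOn

theorem IsPseudointersection.preimage_equiv {β : Type*} {B : Set β} {𝒜 : Set (Set α)} (e : α ≃ β)
    (h : IsPseudointersection B ((e '' ·) '' 𝒜)) : IsPseudointersection (e ⁻¹' B) 𝒜 := by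
  refine ⟨h.1.preimage (by simp), fun A hA => ?_⟩
  have := (h.2 _ (mem_image_of_mem _ hA)).preimage e.injective.injOn
  rwa [preimage_sdiff, e.preimage_image] at this

theorem hasStrongFIP_of_subset_range_antitone {ι : Type*} [Preorder ι] [IsDirectedOrder ι]
    [Nonempty ι] {C : ι → Set α} (hC : Antitone C) (hinf : ∀ i, (C i).Infinite)
    {𝒜 : Set (Set α)} (h𝒜 : 𝒜 ⊆ range C) : HasStrongFIP 𝒜 := by
  classical
  intro F hF
  rw [← image_univ] at h𝒜
  obtain ⟨F', -, rfl⟩ := Finset.subset_set_image_iff.1 (hF.trans h𝒜)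
  obtain ⟨i, hi⟩ := hC.directed_ge.finset_le F'
  rw [Finset.set_biInter_finset_image]
  exact (hinf i).mono (subset_iInter₂ hi)

end Pseudointersection

theorem exists_isPseudointersection_nat {𝒜 : Set (Set ℕ)} (h𝒜 : #𝒜 < pseudoNum)
    (hfip : HasStrongFIP 𝒜) : ∃ B, IsPseudointersection B 𝒜 := by
  by_contra hno
  exact h𝒜.not_ge (csInf_le' ⟨𝒜, rfl, hfip, hno⟩)

theorem exists_isPseudointersection {α : Type} [Denumerable α] {𝒜 : Set (Set α)}
    (h𝒜 : #𝒜 < pseudoNum) (hfip : HasStrongFIP 𝒜) : ∃ B, IsPseudointersection B 𝒜 := by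
  let e := Denumerable.eqv α
  obtain ⟨B, hB⟩ := exists_isPseudointersection_nat (mk_image_le.trans_lt h𝒜) (hfip.image_equiv e)
  exact ⟨_, hB.preimage_equiv e⟩

section Refinements

variable {X : Type*} (b : ℕ → Set X)

def RefinesBasis (s : List ℕ) : Prop :=
  ∀ k (hk : k < s.length), b s[k] ⊆ b k

def refinementsAvoiding (T : Finset X) (n : ℕ) : Set (List ℕ) :=
  {s | RefinesBasis b s ∧ n ≤ s.length ∧ ∀ i ∈ s, Disjoint (b i) T}

variable {b}

theorem antitone_refinementsAvoiding : Antitone (Function.uncurry (refinementsAvoiding b)) :=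
  fun _ _ h _ ⟨hs, hn, hT⟩ =>
    ⟨hs, h.2.trans hn, fun i hi => (hT i hi).mono_right (Finset.coe_subset.2 h.1)⟩

variable [TopologicalSpace X] [T1Space X] [∀ x : X, NeBot (𝓝[≠] x)]

theorem exists_basis_subset_diff (hb : IsTopologicalBasis (range b)) (hne : ∀ k, (b k).Nonempty)
    (k : ℕ) (T : Finset X) : ∃ j, b j ⊆ b k \ T := by
  have hopen : IsOpen (b k \ T) := (hb.isOpen (mem_range_self k)).sdiff T.finite_toSet.isClosed
  obtain ⟨x, hx⟩ := hne k
  obtain ⟨y, hy⟩ := ((infinite_of_mem_nhds x ((hb.isOpen (mem_range_self k)).mem_nhds hx)).sdiff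
    T.finite_toSet).nonempty
  obtain ⟨_, ⟨j, rfl⟩, -, hj⟩ := hb.exists_subset_of_mem_open hy hopen
  exact ⟨j, hj⟩

theorem refinementsAvoiding_infinite (hb : IsTopologicalBasis (range b))
    (hne : ∀ k, (b k).Nonempty) (T : Finset X) (n : ℕ) :
    (refinementsAvoiding b T n).Infinite := by
  choose j hj using exists_basis_subset_diff hb hne (T := T)
  refine infinite_of_injective_forall_mem (f := fun m => (List.range (n + m)).map j)
    (fun m m' h => by simpa using congrArg List.length h) fun m => ⟨fun k hk => ?_, by simp, ?_⟩
  · simpa only [List.getElem_map, List.getElem_range] using (hj k).trans sdiff_subset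
  · simp only [List.mem_map]
    rintro _ ⟨k, -, rfl⟩
    exact disjoint_sdiff_left.mono_left (hj k)

end Refinements

theorem exists_seq_basis_forall_nonempty (X : Type*) [TopologicalSpace X]
    [SecondCountableTopology X] [Nonempty X] : ∃ b : ℕ → Set X, IsTopologicalBasis (range b) ∧ ∀ k, (b k).Nonempty := by
  obtain ⟨t, htc, hte, htb⟩ := exists_countable_basis X
  have ht : t.Nonempty := Nonempty.of_sUnion_eq_univ htb.sUnion_eq
  obtain ⟨b, rfl⟩ := htc.exists_eq_range ht
  exact ⟨b, htb, fun k => nonempty_iff_ne_empty.2 fun h => hte ⟨k, h⟩⟩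

theorem dense_biUnion_refinements {X : Type*} [TopologicalSpace X] {b : ℕ → Set X}
    (hb : IsTopologicalBasis (range b)) (hne : ∀ k, (b k).Nonempty) {B : Set (List ℕ)}
    (hB : B.Infinite) (hlong : ∀ n, (B \ refinementsAvoiding b ∅ n).Finite)
    {t : Set (List ℕ)} (ht : t.Finite) : Dense (⋃ s ∈ B \ t, ⋃ i ∈ s, b i) := by
  refine dense_iff_inter_open.2 fun O hO ⟨x, hx⟩ => ?_
  obtain ⟨_, ⟨k, rfl⟩, -, hk⟩ := hb.exists_subset_of_mem_open hx hO
  obtain ⟨s, hsB, hs⟩ := (hB.sdiff (ht.union (hlong (k + 1)))).nonempty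
  simp only [mem_union, Set.mem_sdiff, not_or, not_and, not_not] at hs
  obtain ⟨hRef, hlen, -⟩ := hs.2 hsB
  obtain ⟨y, hy⟩ := hne s[k]
  exact ⟨y, hk (hRef k hlen hy), mem_biUnion ⟨hsB, hs.1⟩ (mem_biUnion (List.getElem_mem _) hy)⟩

theorem isMeagre_of_mk_lt_pseudoNum {X : Type} [TopologicalSpace X] [SecondCountableTopology X]
    [T1Space X] [∀ x : X, NeBot (𝓝[≠] x)] (hp : ℵ₀ < pseudoNum) {S : Set X}
    (hS : #S < pseudoNum) : IsMeagre S := by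
  classical
  rcases isEmpty_or_nonempty X with hX | hX
  · simpa only [Subsingleton.elim S ∅] using IsMeagre.empty
  obtain ⟨b, hb, hne⟩ := exists_seq_basis_forall_nonempty X
  let 𝒜 := Function.uncurry (refinementsAvoiding b) ''
    ((fun x => ({x}, 0)) '' S ∪ range fun n => (∅, n))
  have h𝒜 : #𝒜 < pseudoNum := mk_image_le.trans_lt <| (mk_union_le _ _).trans_lt <|
    add_lt_of_lt hp.le (mk_image_le.trans_lt hS) (mk_range_le.trans_lt (by simpa using hp))
  obtain ⟨B, hBinf, hB⟩ := exists_isPseudointersection h𝒜 <|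
    hasStrongFIP_of_subset_range_antitone antitone_refinementsAvoiding
      (fun p => refinementsAvoiding_infinite hb hne p.1 p.2) (image_subset_range _ _)
  have hU (t : Finset (List ℕ)) : (⋃ s ∈ B \ t, ⋃ i ∈ s, b i) ∈ residual X :=
    residual_of_dense_open
      (isOpen_biUnion fun s _ => isOpen_biUnion fun i _ => hb.isOpen (mem_range_self i))
      (dense_biUnion_refinements hb hne hBinf
        (fun n => hB _ (mem_image_of_mem _ (mem_union_right _ (mem_range_self n)))) t.finite_toSet)
  refine mem_of_superset (countable_iInter_mem.2 hU) fun x hx hxS => ?_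
  have hfin := hB _ (mem_image_of_mem _ (mem_union_left _ (mem_image_of_mem _ hxS)))
  obtain ⟨s, ⟨hsB, hst⟩, hxs⟩ := mem_iUnion₂.1 (mem_iInter.1 hx hfin.toFinset)
  obtain ⟨i, hi, hxi⟩ := mem_iUnion₂.1 hxs
  have hsA : s ∈ refinementsAvoiding b {x} 0 :=
    by_contra fun h => hst (hfin.mem_toFinset.2 ⟨hsB, h⟩)
  exact disjoint_singleton_right.1 (by simpa using hsA.2.2 i hi) hxi

theorem exists_uncovered_of_no_small_basis {I : Set (Set ℕ)} (hI : ℵ₀ ≤ #I)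
    (hnb : ∀ β, IsIdealBasis I β → #I ≤ #β) :
    ∃ C : I → Set ℕ, (∀ i, C i ∈ I) ∧ ∀ S ∈ I, #{i | C i ⊆ S} < #I := by
  obtain ⟨r, _, hr⟩ := exists_ord_eq I
  have hsmall (j : I) : #{i | r i j} < #I := card_typein_lt j hr
  have hC (j : I) : ∃ C ∈ I, ∀ i, r i j → ¬ C ⊆ i := by
    by_contra! h
    refine (hnb (Subtype.val '' {i | r i j}) ⟨?_, fun A hA => ?_⟩).not_gt
      (mk_image_le.trans_lt (hsmall j))
    · rintro _ ⟨i, -, rfl⟩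
      exact i.2
    · obtain ⟨i, hij, hAi⟩ := h A hA
      exact ⟨i, mem_image_of_mem _ hij, hAi⟩
  choose C hCI hCnot using hC
  refine ⟨C, hCI, fun S hS => ?_⟩
  have hsub : {i | C i ⊆ S} ⊆ {i | r i ⟨S, hS⟩} ∪ {⟨S, hS⟩} := fun i hi => by
    rcases trichotomous_of r i ⟨S, hS⟩ with h | h | h
    exacts [Or.inl h, Or.inr h, (hCnot i _ h hi).elim]
  exact (mk_le_mk_of_subset hsub).trans_lt <| (mk_union_le _ _).trans_lt <|
    add_lt_of_lt hI (hsmall _) (by simpa using one_lt_aleph0.trans_le hI)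

theorem stmt_1_general (hpc : pseudoNum = Cardinal.continuum)
    (I : Set (Set ℕ))
    (hnb : ∀ β : Set (Set ℕ), IsIdealBasis I β → ¬ Cardinal.mk β < pseudoNum) :
    ∃ f : Set ℕ → Set ℝ, (∀ A ∈ I, IsMeagre (f A)) ∧
      (∀ A ∈ I, ∀ B ∈ I, A ⊆ B → f A ⊆ f B) ∧ (⋃ A ∈ I, f A) = Set.univ := by
  rw [hpc] at hnb
  have hI : #I = 𝔠 := le_antisymm ((mk_set_le I).trans_eq mk_set_nat)
    (not_lt.1 (hnb I ⟨subset_rfl, fun A hA => ⟨A, hA, subset_rfl⟩⟩))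
  obtain ⟨C, hCI, hCsmall⟩ := exists_uncovered_of_no_small_basis (hI ▸ aleph0_le_continuum)
    fun β hβ => hI ▸ not_lt.1 (hnb β hβ)
  obtain ⟨e⟩ : Nonempty (ℝ ≃ I) := Cardinal.eq.1 (mk_real.trans hI.symm)
  refine ⟨fun S => e ⁻¹' {i | C i ⊆ S}, fun S hS => ?_, fun S _ T _ hST x hx => hx.trans hST,
    eq_univ_of_forall fun x => mem_biUnion (hCI (e x)) (Subset.refl _)⟩
  exact isMeagre_of_mk_lt_pseudoNum (hpc ▸ aleph0_lt_continuum) <|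
    (mk_preimage_of_injective _ _ e.injective).trans_lt (hpc ▸ hI ▸ hCsmall S hS)

/-- Under 𝔭 = 𝔠, an ideal with no basis of cardinality `< 𝔭` fails property (□),
witnessed by `X = ℝ`. -/
theorem stmt_1 (hpc : pseudoNum = Cardinal.continuum)
    (I : Set (Set ℕ)) (hI : IsIdealOn I)
    (hnb : ∀ β : Set (Set ℕ), IsIdealBasis I β → ¬ Cardinal.mk β < pseudoNum) :
    ∃ f : Set ℕ → Set ℝ, (∀ A ∈ I, IsMeagre (f A)) ∧
      (∀ A ∈ I, ∀ B ∈ I, A ⊆ B → f A ⊆ f B) ∧ (⋃ A ∈ I, f A) = Set.univ :=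
  stmt_1_general hpc I hnb
end

section
/- An ideal I on ℕ is countably generated if and only if I is a Baire ideal for every topological space X that is of second category in itself; i.e., for every such X and every monotone map f : I → NWD(X) (f(A) ⊆ f(B) whenever A ⊆ B, each f(A) nowhere dense), the union ⋃_{A ∈ I} f(A) is a proper subset of X. -/
open scoped ENNReal Cardinal

namespace IdealAux

variable (I : Set (Set ℕ))

abbrev X := {J : Set ℕ // J ∈ I}

def op (A : Set ℕ) : Set (X I) := {J | ¬ (J : Set ℕ) ⊆ A}

def XA (A : Set ℕ) : Set (X I) := {J | (J : Set ℕ) ⊆ A}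

instance : TopologicalSpace (X I) :=
  TopologicalSpace.generateFrom ((op I) '' I)

lemma isOpen_op {A : Set ℕ} (hA : A ∈ I) : IsOpen (op I A) :=
  TopologicalSpace.GenerateOpen.basic _ ⟨A, hA, rfl⟩

lemma isClosed_XA {A : Set ℕ} (hA : A ∈ I) : IsClosed (XA I A) := by
  have h : XA I A = (op I A)ᶜ := by ext J; simp [XA, op]
  rw [h]
  exact (isOpen_op I hA).isClosed_compl

lemma basis : TopologicalSpace.IsTopologicalBasis
    ((fun f : Set (Set (X I)) => ⋂₀ f) '' { f : Set (Set (X I)) | f.Finite ∧ f ⊆ (op I) '' I }) :=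
  TopologicalSpace.isTopologicalBasis_of_subbasis rfl

/-- key step: any open subset of `XA A` is empty. -/
lemma open_subset_XA_empty (hI : IsIdealOn I) {A : Set ℕ} (hA : A ∈ I)
    {U : Set (X I)} (hU : IsOpen U) (hUA : U ⊆ XA I A) : U = ∅ := by
  obtain ⟨hu, hdown, hunion, hfin⟩ := hI
  by_contra hne
  obtain ⟨x, hx⟩ := Set.nonempty_iff_ne_empty.2 hne
  obtain ⟨b, hb, hxb, hbU⟩ := (basis I).exists_subset_of_mem_open hx hU
  obtain ⟨t, ⟨htfin, htsub⟩, rfl⟩ := hb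
  -- A ≠ univ
  have hAne : A ≠ Set.univ := fun h => hu (h ▸ hA)
  obtain ⟨k, hk⟩ : ∃ k, k ∉ A := by
    by_contra h; push_neg at h
    exact hAne (Set.eq_univ_of_forall h)
  have hJ' : (x : Set ℕ) ∪ {k} ∈ I := hunion _ x.2 _ (hfin _ (Set.finite_singleton k))
  set y : X I := ⟨(x : Set ℕ) ∪ {k}, hJ'⟩ with hy
  have hyt : y ∈ ⋂₀ t := by
    intro s hs
    obtain ⟨B, hB, rfl⟩ := htsub hs
    have hxs : x ∈ op I B := hxb _ hs
    simp only [op, Set.mem_setOf_eq] at hxs ⊢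
    intro h
    exact hxs (fun m hm => h (Set.mem_union_left _ hm))
  have := hUA (hbU hyt)
  simp only [XA, Set.mem_setOf_eq, hy] at this
  exact hk (this (Set.mem_union_right _ rfl))

lemma nwd_XA (hI : IsIdealOn I) {A : Set ℕ} (hA : A ∈ I) : IsNowhereDense (XA I A) := by
  rw [(isClosed_XA I hA).isNowhereDense_iff]
  exact open_subset_XA_empty I hI hA isOpen_interior interior_subset

/-- every closed proper subset is covered by finitely many `XA`'s. -/
lemma closed_subset_finite_union {F : Set (X I)} (hF : IsClosed F) (hne : F ≠ Set.univ) :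
    ∃ s : Set (Set ℕ), s ⊆ I ∧ s.Finite ∧ F ⊆ ⋃ A ∈ s, XA I A := by
  obtain ⟨x, hx⟩ : Fᶜ.Nonempty := by
    rw [Set.nonempty_compl]; exact hne
  obtain ⟨b, hb, hxb, hbU⟩ := (basis I).exists_subset_of_mem_open hx hF.isOpen_compl
  obtain ⟨t, ⟨htfin, htsub⟩, rfl⟩ := hb
  have : ∀ s : t, ∃ A ∈ I, op I A = (s : Set (X I)) := fun s => by
    obtain ⟨A, hA, h⟩ := htsub s.2; exact ⟨A, hA, h⟩
  choose g hg1 hg2 using this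
  refine ⟨Set.range g, Set.range_subset_iff.2 hg1, ?_, ?_⟩
  · have : Finite t := htfin.to_subtype
    exact Set.finite_range g
  · intro z hz
    have hz' : z ∉ ⋂₀ t := fun h => hbU h hz
    simp only [Set.mem_sInter, not_forall] at hz'
    obtain ⟨s, hst, hzs⟩ := hz'
    refine Set.mem_iUnion₂.2 ⟨g ⟨s, hst⟩, Set.mem_range_self _, ?_⟩
    have h2 : op I (g ⟨s, hst⟩) = s := hg2 ⟨s, hst⟩
    rw [← h2] at hzs
    simpa [op, XA] using hzs

end IdealAux

/-- An ideal is countably generated iff it is a Baire ideal for every topological space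
of second category in itself. -/
theorem stmt_3 (I : Set (Set ℕ)) (hI : IsIdealOn I) :
    (∃ β : Set (Set ℕ), IsIdealBasis I β ∧ β.Countable) ↔
      ∀ (X : Type) [TopologicalSpace X],
        ¬ IsMeagre (Set.univ : Set X) → IsBaireIdealFor I X := by
  classical
  constructor
  · rintro ⟨β, ⟨hβI, hβcof⟩, hβc⟩ X _ hX f hnwd hmono hun
    obtain ⟨g, hg⟩ := Set.countable_iff_exists_subset_range.1 hβc
    set g' : ℕ → Set ℕ := fun n => if g n ∈ I then g n else ∅ with hg'
    have hg'I : ∀ n, g' n ∈ I := fun n => by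
      by_cases h : g n ∈ I <;> simp [hg', h, hI.2.2.2 ∅ Set.finite_empty]
    set C : ℕ → Set ℕ := fun n => Nat.rec (g' 0) (fun k Ck => Ck ∪ g' (k + 1)) n with hC'
    have hC : ∀ n, C n ∈ I := by
      intro n
      induction n with
      | zero => exact hg'I 0
      | succ k ih => exact hI.2.2.1 _ ih _ (hg'I (k + 1))
    have hgC : ∀ n, g' n ⊆ C n := by
      intro n
      cases n with
      | zero => exact subset_rfl
      | succ k => exact Set.subset_union_right
    apply hX
    rw [isMeagre_iff_countable_union_isNowhereDense]
    refine ⟨Set.range (fun n => f (C n)), ?_, Set.countable_range _, ?_⟩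
    · rintro _ ⟨n, rfl⟩; exact hnwd _ (hC n)
    · intro x _
      have hx : x ∈ ⋃ A ∈ I, f A := hun ▸ Set.mem_univ x
      obtain ⟨A, hA, hxA⟩ := Set.mem_iUnion₂.1 hx
      obtain ⟨B, hB, hAB⟩ := hβcof A hA
      obtain ⟨n, hn⟩ := hg hB
      have hgn : g' n = B := by rw [hg']; simp only [← hn]; rw [if_pos (hβI (hn ▸ hB))]
      refine Set.mem_sUnion.2 ⟨f (C n), Set.mem_range_self _,
        hmono A hA (C n) (hC n) (hAB.trans (hgn ▸ hgC n)) hxA⟩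
  · intro h
    by_contra hnc
    have hXne : Nonempty (IdealAux.X I) := ⟨⟨∅, hI.2.2.2 ∅ Set.finite_empty⟩⟩
    have hX : ¬ IsMeagre (Set.univ : Set (IdealAux.X I)) := by
      intro hm
      rw [isMeagre_iff_countable_union_isNowhereDense] at hm
      obtain ⟨S, hSnwd, hSc, hSsub⟩ := hm
      have key : ∀ F : S, ∃ s : Set (Set ℕ), s ⊆ I ∧ s.Finite ∧
          closure (F : Set (IdealAux.X I)) ⊆ ⋃ A ∈ s, IdealAux.XA I A := by
        intro F
        apply IdealAux.closed_subset_finite_union I isClosed_closure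
        intro hcl
        have hn := (hSnwd F F.2).closure
        rw [hcl] at hn
        simp only [IsNowhereDense, closure_univ, interior_univ] at hn
        exact hXne.elim fun x => by rw [Set.eq_empty_iff_forall_notMem] at hn; exact hn x trivial
      choose sF hsF1 hsF2 hsF3 using key
      set β₀ : Set (Set ℕ) := ⋃ F : S, sF F with hβ₀'
      have hβ₀c : β₀.Countable := by
        have : Countable S := hSc.to_subtype
        exact Set.countable_iUnion (fun F => (hsF2 F).countable)
      have hβ₀I : β₀ ⊆ I := Set.iUnion_subset fun F => hsF1 F
      have hA : ∃ A ∈ I, ∀ B ∈ β₀, ¬ A ⊆ B := by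
        by_contra hno
        push_neg at hno
        exact hnc ⟨β₀, ⟨hβ₀I, hno⟩, hβ₀c⟩
      obtain ⟨A, hA, hAnb⟩ := hA
      have hx : (⟨A, hA⟩ : IdealAux.X I) ∈ ⋃₀ S := hSsub trivial
      obtain ⟨F, hF, hxF⟩ := hx
      have := hsF3 ⟨F, hF⟩ (subset_closure hxF)
      obtain ⟨B, hB, hxB⟩ := Set.mem_iUnion₂.1 this
      exact hAnb B (Set.mem_iUnion.2 ⟨⟨F, hF⟩, hB⟩) hxB
    refine h (IdealAux.X I) hX (fun A => IdealAux.XA I A)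
      (fun A hA => IdealAux.nwd_XA I hI hA)
      (fun A hA B hB hAB x hx => hx.trans hAB) ?_
    rw [Set.eq_univ_iff_forall]
    intro x
    exact Set.mem_iUnion₂.2 ⟨(x : Set ℕ), x.2, show (x : Set ℕ) ⊆ (x : Set ℕ) from fun _ h => h⟩
end

section
/- Let D be a discrete space of infinite cardinality κ, and let I be an ideal on ℕ. If I is a Baire ideal for the product space D^ℕ, then the following tree property holds: for every monotone map f : D^{<ℕ} → P(I) (s ⊑ t implies f(s) ⊆ f(t)) such that for every finite sequence s, (i) f(s) is downward closed in I (hereditary), and (ii) ⋃_{t ⊒ s} f(t) = I, there exists σ ∈ D^ℕ with ⋃_{k ∈ ℕ} f(σ|_k) = I. -/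
open scoped ENNReal Cardinal

/-!
If no branch works, every `σ` lies in `avoiding f A` for some `A ∈ I`: the set of branches along
which `A` never enters `f`. These sets are closed, since membership of `A` in `f (σ|k)` depends only
on a finite initial segment of `σ`; nowhere dense, since by the covering property every cylinder
`[σ|n]` extends to a node `t` with `A ∈ f t`; and monotone in `A` by heredity. So they form a
monotone `I`-indexed family of nowhere dense sets covering `D^ℕ`, against the Baire property.
-/

open PiNat

namespace BaireIdeal

variable {D : Type*}

def initSeg (σ : ℕ → D) (k : ℕ) : List D := List.ofFn fun i : Fin k => σ i

@[simp]
lemma length_initSeg (σ : ℕ → D) (k : ℕ) : (initSeg σ k).length = k := List.length_ofFn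

lemma initSeg_eq_of_mem_cylinder {σ τ : ℕ → D} {n : ℕ} (h : τ ∈ cylinder σ n) :
    initSeg τ n = initSeg σ n :=
  congrArg List.ofFn <| funext fun i => h i i.2

lemma exists_mem_cylinder_initSeg_eq {σ : ℕ → D} {n : ℕ} {t : List D}
    (ht : initSeg σ n <+: t) : ∃ τ ∈ cylinder σ n, initSeg τ t.length = t := by
  refine ⟨fun i => t.getD i (σ i), fun i hi => ?_, List.ext_getElem (by simp) fun i _ hi => ?_⟩
  · have hi' : i < (initSeg σ n).length := by simpa using hi
    change t.getD i (σ i) = σ i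
    rw [List.getD_eq_getElem _ _ (hi'.trans_le ht.length_le), ← ht.getElem hi']
    exact List.getElem_ofFn ..
  · simp [initSeg]

def avoiding (f : List D → Set (Set ℕ)) (A : Set ℕ) : Set (ℕ → D) :=
  {σ | ∀ k, A ∉ f (initSeg σ k)}

lemma avoiding_mono {f : List D → Set (Set ℕ)} (hher : ∀ s, ∀ A ∈ f s, ∀ B, B ⊆ A → B ∈ f s)
    {A B : Set ℕ} (hAB : A ⊆ B) : avoiding f A ⊆ avoiding f B :=
  fun _ hσ k hB => hσ k (hher _ B hB A hAB)

variable [TopologicalSpace D] [DiscreteTopology D]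

lemma isLocallyConstant_initSeg (k : ℕ) : IsLocallyConstant fun σ : ℕ → D => initSeg σ k :=
  (IsLocallyConstant.iff_exists_open _).2 fun σ =>
    ⟨cylinder σ k, isOpen_cylinder _ σ k, self_mem_cylinder σ k,
      fun _ hτ => initSeg_eq_of_mem_cylinder hτ⟩

lemma isClosed_avoiding (f : List D → Set (Set ℕ)) (A : Set ℕ) : IsClosed (avoiding f A) := by
  have : avoiding f A = ⋂ k, ((fun σ : ℕ → D => initSeg σ k) ⁻¹' {s | A ∈ f s})ᶜ := by
    ext σ; simp [avoiding]
  rw [this]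
  exact isClosed_iInter fun k => (isLocallyConstant_initSeg k _).isClosed_compl

lemma isNowhereDense_avoiding {f : List D → Set (Set ℕ)} {A : Set ℕ}
    (hA : ∀ s, ∃ t, s <+: t ∧ A ∈ f t) : IsNowhereDense (avoiding f A) := by
  rw [(isClosed_avoiding f A).isNowhereDense_iff, interior_eq_empty_iff_dense_compl,
    (isTopologicalBasis_cylinders fun _ => D).dense_iff]
  rintro _ ⟨σ, n, rfl⟩ -
  obtain ⟨t, hst, hAt⟩ := hA (initSeg σ n)
  obtain ⟨τ, hτ, hτt⟩ := exists_mem_cylinder_initSeg_eq hst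
  exact ⟨τ, hτ, fun h => h t.length (by rwa [hτt])⟩

end BaireIdeal

open BaireIdeal in
theorem stmt_5_general (D : Type) [TopologicalSpace D] [DiscreteTopology D]
    (I : Set (Set ℕ))
    (hBaire : IsBaireIdealFor I (ℕ → D))
    (f : List D → Set (Set ℕ))
    (hsub : ∀ s : List D, f s ⊆ I)
    (hher : ∀ s : List D, ∀ A ∈ f s, ∀ B : Set ℕ, B ⊆ A → B ∈ f s)
    (hcov : ∀ s : List D, (⋃ t ∈ {t : List D | s <+: t}, f t) = I) :
    ∃ σ : ℕ → D, (⋃ k : ℕ, f (List.ofFn fun i : Fin k => σ i)) = I := by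
  by_contra! hbranch
  refine hBaire (avoiding f) (fun A hA => isNowhereDense_avoiding fun s => ?_)
    (fun A _ B _ => avoiding_mono hher) (Set.eq_univ_of_forall fun σ => ?_)
  · simpa [← hcov s] using hA
  · obtain ⟨A, hAI, hAσ⟩ := Set.exists_of_ssubset <|
      (Set.iUnion_subset fun k => hsub _).ssubset_of_ne (hbranch σ)
    exact Set.mem_biUnion hAI (by simpa [avoiding, initSeg] using hAσ)

/-- If `I` is a Baire ideal for `D^ℕ` (`D` discrete infinite), then the tree property (3)
holds: every monotone, hereditary, cofinally covering map `f : D^{<ℕ} → 𝒫(I)` admits a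
branch `σ` along which the `f (σ|k)` exhaust `I`. -/
theorem stmt_5 (D : Type) [TopologicalSpace D] [DiscreteTopology D] [Infinite D]
    (I : Set (Set ℕ)) (hI : IsIdealOn I)
    (hBaire : IsBaireIdealFor I (ℕ → D))
    (f : List D → Set (Set ℕ))
    (hmono : ∀ s t : List D, s <+: t → f s ⊆ f t)
    (hsub : ∀ s : List D, f s ⊆ I)
    (hher : ∀ s : List D, ∀ A ∈ f s, ∀ B : Set ℕ, B ⊆ A → B ∈ f s)
    (hcov : ∀ s : List D, (⋃ t ∈ {t : List D | s <+: t}, f t) = I) :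
    ∃ σ : ℕ → D, (⋃ k : ℕ, f (List.ofFn fun i : Fin k => σ i)) = I :=
  stmt_5_general D I hBaire f hsub hher hcov
end

section
/- Let D be a discrete space of infinite cardinality κ and I an ideal on ℕ. Suppose that for every monotone f : D^{<ℕ} → P(I) such that for each finite sequence s: (i) f(s) is hereditary, (ii') I = ⋃_{d ∈ D} f(s⌢d), and (iii) f(s) = ⋂_{d ∈ D} f(s⌢d), there exists σ ∈ D^ℕ with ⋃_k f(σ|_k) = I. Then I is a Baire ideal for every complete metric space X of weight at most κ: for every monotone F : I → NWD(X), ⋃_{A ∈ I} F(A) ≠ X. -/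
open scoped ENNReal Cardinal

/-!
Enumerate a basis of `X` by `D` and use it to build a Cantor scheme `V : D^{<ℕ} → Open(X)` with
closures nested, diameters tending to `0`, and such that below every node the children refine every
open subset of it. For a monotone nowhere dense family `F` the tree
`f(s) = {A ∈ I | F(A) ∩ V(s) = ∅}` then satisfies the hypotheses of the tree property: `f(s⌢d)`
exhausts `I` because each `V(s) \ closure F(A)` is a nonempty open set containing some `V(s⌢d)`,
and `f(s) = ⋂_d f(s⌢d)` because the children of `s` cover `V(s)`. A branch `σ` with
`⋃_k f(σ|k) = I` yields, by completeness, a point of `⋂_k V(σ|k)`, which lies in no `F(A)`.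
-/

open Set Filter Topology Metric CantorScheme PiNat TopologicalSpace

universe u

variable {D X : Type*}

lemma List.reverse_ofFn_eq_res (σ : ℕ → D) (k : ℕ) :
    (List.ofFn fun i : Fin k => σ i).reverse = res σ k := by
  induction k with
  | zero => rfl
  | succ k ih =>
    rw [List.ofFn_succ', List.concat_eq_append, List.reverse_concat]
    simp [ih]

lemma TopologicalSpace.IsTopologicalBasis.exists_isTopologicalBasis_range_of_mk_le
    {D X : Type u} [TopologicalSpace X] [Nonempty X] {ℬ : Set (Set X)} (hB : IsTopologicalBasis ℬ)
    (hcard : Cardinal.mk ℬ ≤ Cardinal.mk D) : ∃ U : D → Set X, IsTopologicalBasis (range U) := by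
  obtain ⟨x⟩ := ‹Nonempty X›
  obtain ⟨B, hB₀, -, -⟩ := hB.exists_subset_of_mem_open (mem_univ x) isOpen_univ
  have : Nonempty ℬ := ⟨⟨B, hB₀⟩⟩
  obtain ⟨emb⟩ := Cardinal.le_def _ _ |>.mp hcard
  refine ⟨fun d => (Function.invFun emb d : ℬ), ?_⟩
  rwa [range_comp', (Function.invFun_surjective emb.injective).range_eq, image_univ,
    Subtype.range_coe]

lemma TopologicalSpace.IsTopologicalBasis.exists_closure_subset_ediam_le [PseudoMetricSpace X]
    {ℬ : Set (Set X)} (hB : IsTopologicalBasis ℬ) {G : Set X} (hG : IsOpen G) {x : X} (hx : x ∈ G)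
    {ε : ENNReal} (hε : ε ≠ 0) : ∃ B ∈ ℬ, x ∈ B ∧ closure B ⊆ G ∧ ediam B ≤ ε := by
  have hW : G ∩ eball x (ε / 2) ∈ 𝓝 x :=
    inter_mem (hG.mem_nhds hx) (eball_mem_nhds x (ENNReal.half_pos hε))
  obtain ⟨t, ht, htc, htW⟩ := exists_mem_nhds_isClosed_subset hW
  obtain ⟨B, hBℬ, hxB, hBt⟩ := hB.mem_nhds_iff.mp ht
  refine ⟨B, hBℬ, hxB, (closure_minimal hBt htc).trans (htW.trans inter_subset_left), ?_⟩
  calc ediam B ≤ ediam (eball x (ε / 2)) :=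
        ediam_mono (hBt.trans (htW.trans inter_subset_right))
    _ ≤ 2 * (ε / 2) := ediam_eball_le
    _ = ε := ENNReal.mul_div_cancel two_ne_zero ENNReal.ofNat_ne_top

/-- `d :: l` is the extension of `l` by `d`, as in `CantorScheme`. -/
structure IsFineScheme [PseudoMetricSpace X] (V : List D → Set X) : Prop where
  isOpen (l : List D) : IsOpen (V l)
  nonempty (l : List D) : (V l).Nonempty
  closureAntitone : ClosureAntitone V
  vanishingDiam : VanishingDiam V
  exists_cons (l : List D) {G : Set X} {x : X} (hG : IsOpen G) (hx : x ∈ G) (hGV : G ⊆ V l) :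
    ∃ d, x ∈ V (d :: l) ∧ V (d :: l) ⊆ G

section BasisScheme

variable [PseudoMetricSpace X] (U : D → Set X)

def IsCandidate (V : Set X) (n : ℕ) (d : D) : Prop :=
  (U d).Nonempty ∧ closure (U d) ⊆ V ∧ ediam (U d) ≤ 2⁻¹ ^ n

open Classical in
noncomputable def candidate (V : Set X) (n : ℕ) (d : D) : D :=
  if IsCandidate U V n d then d else if h : ∃ e, IsCandidate U V n e then h.choose else d

noncomputable def basisScheme : List D → Set X
  | [] => univ
  | d :: l => U (candidate U (basisScheme l) l.length d)

variable {U}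

lemma candidate_of_isCandidate {V : Set X} {n : ℕ} {d : D} (h : IsCandidate U V n d) :
    candidate U V n d = d :=
  if_pos h

lemma isCandidate_candidate {V : Set X} {n : ℕ} (h : ∃ e, IsCandidate U V n e) (d : D) :
    IsCandidate U V n (candidate U V n d) := by
  unfold candidate
  split_ifs with hd
  exacts [hd, h.choose_spec]

lemma exists_mem_subset_isCandidate (hU : IsTopologicalBasis (range U)) {G V : Set X}
    (hG : IsOpen G) (hGV : G ⊆ V) {x : X} (hx : x ∈ G) (n : ℕ) :
    ∃ d, x ∈ U d ∧ U d ⊆ G ∧ IsCandidate U V n d := by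
  obtain ⟨_, ⟨d, rfl⟩, hxd, hcl, hdiam⟩ :=
    hU.exists_closure_subset_ediam_le hG hx (ε := 2⁻¹ ^ n) (by simp)
  exact ⟨d, hxd, subset_closure.trans hcl, ⟨x, hxd⟩, hcl.trans hGV, hdiam⟩

lemma exists_isCandidate (hU : IsTopologicalBasis (range U)) {V : Set X} (hV : IsOpen V)
    (hne : V.Nonempty) (n : ℕ) : ∃ d, IsCandidate U V n d := by
  obtain ⟨d, -, -, hd⟩ := exists_mem_subset_isCandidate hU hV subset_rfl hne.some_mem n
  exact ⟨d, hd⟩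

lemma isCandidate_basisScheme_cons [Nonempty X] (hU : IsTopologicalBasis (range U)) (l : List D)
    (d : D) :
    IsCandidate U (basisScheme U l) l.length (candidate U (basisScheme U l) l.length d) := by
  refine isCandidate_candidate ?_ d
  induction l with
  | nil => exact exists_isCandidate hU isOpen_univ univ_nonempty 0
  | cons a l ih =>
    exact exists_isCandidate hU (hU.isOpen (mem_range_self _)) (isCandidate_candidate ih a).1 _

theorem isFineScheme_basisScheme [Nonempty X] (hU : IsTopologicalBasis (range U)) :
    IsFineScheme (basisScheme U) where
  isOpen
    | [] => isOpen_univ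
    | _ :: _ => hU.isOpen (mem_range_self _)
  nonempty
    | [] => univ_nonempty
    | d :: l => (isCandidate_basisScheme_cons hU l d).1
  closureAntitone l d := (isCandidate_basisScheme_cons hU l d).2.1
  vanishingDiam σ := by
    refine (tendsto_add_atTop_iff_nat 1).mp <| tendsto_of_tendsto_of_tendsto_of_le_of_le
      tendsto_const_nhds (ENNReal.tendsto_pow_atTop_nhds_zero_of_lt_one (r := 2⁻¹) (by norm_num))
      (fun _ => zero_le) fun n => ?_
    exact (isCandidate_basisScheme_cons hU (res σ n) (σ n)).2.2.trans_eq (by rw [res_length])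
  exists_cons l G x hG hx hGV := by
    obtain ⟨d, hxd, hdG, hd⟩ := exists_mem_subset_isCandidate hU hG hGV hx l.length
    refine ⟨d, ?_, ?_⟩ <;> simpa [basisScheme, candidate_of_isCandidate hd]

end BasisScheme

/-- The tree `f` of the paper; nodes `s` are in the order of `D^{<ℕ}`, whereas `V` is indexed in
the reversed (`CantorScheme`) order. -/
def schemeTree (I : Set (Set ℕ)) (F : Set ℕ → Set X) (V : List D → Set X) (s : List D) :
    Set (Set ℕ) :=
  {A ∈ I | Disjoint (F A) (V s.reverse)}

lemma schemeTree_hereditary {I : Set (Set ℕ)} {F : Set ℕ → Set X}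
    (hI : ∀ A ∈ I, ∀ B, B ⊆ A → B ∈ I) (hmono : ∀ A ∈ I, ∀ B ∈ I, A ⊆ B → F A ⊆ F B)
    {V : List D → Set X} (s : List D) :
    ∀ A ∈ schemeTree I F V s, ∀ B, B ⊆ A → B ∈ schemeTree I F V s := by
  rintro A ⟨hA, hdisj⟩ B hBA
  have hB := hI A hA B hBA
  exact ⟨hB, hdisj.mono_left (hmono B hB A hA hBA)⟩

namespace IsFineScheme

variable [PseudoMetricSpace X] {V : List D → Set X} {I : Set (Set ℕ)} {F : Set ℕ → Set X}

lemma append_subset (hV : IsFineScheme V) (u l : List D) : V (u ++ l) ⊆ V l := by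
  induction u with
  | nil => exact subset_rfl
  | cons d u ih => exact (hV.closureAntitone.antitone (u ++ l) d).trans ih

lemma schemeTree_mono (hV : IsFineScheme V) {s t : List D} (hst : s <+: t) :
    schemeTree I F V s ⊆ schemeTree I F V t := by
  obtain ⟨u, rfl⟩ := hst
  rintro A ⟨hA, hdisj⟩
  refine ⟨hA, hdisj.mono_right ?_⟩
  rw [List.reverse_append]
  exact hV.append_subset _ _

lemma iUnion_schemeTree_append (hV : IsFineScheme V) (hnwd : ∀ A ∈ I, IsNowhereDense (F A))
    (s : List D) : ⋃ d, schemeTree I F V (s ++ [d]) = I := by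
  refine (iUnion_subset fun d _ hA => hA.1).antisymm fun A hA => ?_
  have hdense : Dense (closure (F A))ᶜ := interior_eq_empty_iff_dense_compl.mp (hnwd A hA)
  obtain ⟨x, hx⟩ := hdense.inter_open_nonempty _ (hV.isOpen _) (hV.nonempty s.reverse)
  obtain ⟨d, -, hd⟩ :=
    hV.exists_cons _ ((hV.isOpen _).inter isClosed_closure.isOpen_compl) hx inter_subset_left
  refine mem_iUnion.mpr ⟨d, hA, ?_⟩
  rw [List.reverse_concat]
  exact disjoint_compl_right.mono subset_closure (hd.trans inter_subset_right)

lemma schemeTree_eq_iInter (hV : IsFineScheme V) (s : List D) :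
    schemeTree I F V s = ⋂ d, schemeTree I F V (s ++ [d]) := by
  refine (subset_iInter fun d => hV.schemeTree_mono ⟨[d], rfl⟩).antisymm fun A hA => ?_
  rw [mem_iInter] at hA
  simp only [schemeTree, List.reverse_concat, mem_ofPred_eq] at hA
  obtain ⟨x, hx⟩ := hV.nonempty s.reverse
  obtain ⟨d, -⟩ := hV.exists_cons _ (hV.isOpen _) hx subset_rfl
  refine ⟨(hA d).1, disjoint_left.mpr fun y hyF hyV => ?_⟩
  obtain ⟨e, hye, -⟩ := hV.exists_cons _ (hV.isOpen _) hyV subset_rfl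
  exact disjoint_left.mp (hA e).2 hyF hye

theorem iUnion_ne_univ_of_branch [CompleteSpace X] (hV : IsFineScheme V) {σ : ℕ → D}
    (hσ : ⋃ k : ℕ, schemeTree I F V (List.ofFn fun i : Fin k => σ i) = I) :
    ⋃ A ∈ I, F A ≠ univ := by
  have hσ_dom : σ ∈ (inducedMap V).1 :=
    (hV.closureAntitone.map_of_vanishingDiam hV.vanishingDiam hV.nonempty).symm ▸ mem_univ σ
  obtain ⟨x, hx⟩ := hσ_dom
  intro hcover
  obtain ⟨A, hA, hxA⟩ := mem_iUnion₂.mp (hcover.symm ▸ mem_univ x : x ∈ ⋃ A ∈ I, F A)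
  obtain ⟨k, -, hdisj⟩ := mem_iUnion.mp (hσ.symm ▸ hA : A ∈ ⋃ k : ℕ, _)
  rw [List.reverse_ofFn_eq_res] at hdisj
  exact disjoint_left.mp hdisj hxA (mem_iInter.mp hx k)

end IsFineScheme

theorem stmt_6_general (D : Type)
    (I : Set (Set ℕ)) (hI : IsIdealOn I)
    (htree : ∀ f : List D → Set (Set ℕ),
      (∀ s t : List D, s <+: t → f s ⊆ f t) →
      (∀ s : List D, f s ⊆ I) →
      (∀ s : List D, ∀ A ∈ f s, ∀ B : Set ℕ, B ⊆ A → B ∈ f s) →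
      (∀ s : List D, (⋃ d : D, f (s ++ [d])) = I) →
      (∀ s : List D, f s = ⋂ d : D, f (s ++ [d])) →
      ∃ σ : ℕ → D, (⋃ k : ℕ, f (List.ofFn fun i : Fin k => σ i)) = I)
    (X : Type) [MetricSpace X] [CompleteSpace X] [Nonempty X]
    (hw : ∃ ℬ : Set (Set X), TopologicalSpace.IsTopologicalBasis ℬ ∧
      Cardinal.mk ℬ ≤ Cardinal.mk D)
    (F : Set ℕ → Set X)
    (hnwd : ∀ A ∈ I, IsNowhereDense (F A))
    (hmono : ∀ A ∈ I, ∀ B ∈ I, A ⊆ B → F A ⊆ F B) :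
    (⋃ A ∈ I, F A) ≠ Set.univ := by
  obtain ⟨ℬ, hB, hcard⟩ := hw
  obtain ⟨U, hU⟩ := hB.exists_isTopologicalBasis_range_of_mk_le hcard
  have hV := isFineScheme_basisScheme hU
  obtain ⟨σ, hσ⟩ := htree (schemeTree I F (basisScheme U)) (fun _ _ => hV.schemeTree_mono)
    (fun _ _ hA => hA.1) (schemeTree_hereditary hI.2.1 hmono) (hV.iUnion_schemeTree_append hnwd)
    hV.schemeTree_eq_iInter
  exact hV.iUnion_ne_univ_of_branch hσ

/-- If the tree property (4) holds for trees over an infinite `D`, then `I` is a Baire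
ideal for every complete metric space of weight at most `#D`. -/
theorem stmt_6 (D : Type) [Infinite D]
    (I : Set (Set ℕ)) (hI : IsIdealOn I)
    (htree : ∀ f : List D → Set (Set ℕ),
      (∀ s t : List D, s <+: t → f s ⊆ f t) →
      (∀ s : List D, f s ⊆ I) →
      (∀ s : List D, ∀ A ∈ f s, ∀ B : Set ℕ, B ⊆ A → B ∈ f s) →
      (∀ s : List D, (⋃ d : D, f (s ++ [d])) = I) →
      (∀ s : List D, f s = ⋂ d : D, f (s ++ [d])) →
      ∃ σ : ℕ → D, (⋃ k : ℕ, f (List.ofFn fun i : Fin k => σ i)) = I)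
    (X : Type) [MetricSpace X] [CompleteSpace X] [Nonempty X]
    (hw : ∃ ℬ : Set (Set X), TopologicalSpace.IsTopologicalBasis ℬ ∧
      Cardinal.mk ℬ ≤ Cardinal.mk D)
    (F : Set ℕ → Set X)
    (hnwd : ∀ A ∈ I, IsNowhereDense (F A))
    (hmono : ∀ A ∈ I, ∀ B ∈ I, A ⊆ B → F A ⊆ F B) :
    (⋃ A ∈ I, F A) ≠ Set.univ :=
  stmt_6_general D I hI htree X hw F hnwd hmono
end

section
/- For an ideal I on ℕ, the following are equivalent: (1) I is a Baire ideal for every Polish space; (2) I is a Baire ideal for the Cantor space 2^ℕ; (3) for every monotone f : 2^{<ℕ} → P(I) such that each f(s) is hereditary and ⋃_{t ⊒ s} f(t) = I for all s, there exists σ ∈ 2^ℕ with ⋃_{k} f(σ|_k) = I. -/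
open scoped ENNReal Cardinal

/-! The Cantor space is Polish, which gives (1) ⇒ (2). For (2) ⇒ (3): if no branch `σ` of `f`
exhausts `I`, the sets `G A = {σ | ∀ k, A ∉ f (σ|k)}`, `A ∈ I`, are closed, monotone in `A`,
nowhere dense by the covering condition on `f`, and cover `2^ℕ`. For (3) ⇒ (1): through the
surjection `ψ`, a binary sequence codes a nested sequence of closed balls with centres in a
countable dense set, each accepted ball at most half as large as the previous one; put
`A ∈ f s` when `F A` misses the ball coded by `s`. Since `F A` is nowhere dense, every node has an
extension whose ball misses it, and by completeness the balls along the branch `σ` given by (3)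
share a point, which lies in no `F A`. -/

open Filter Metric Set TopologicalSpace Topology

/-- Condition (3) of the theorem. -/
def HasTreeProperty (I : Set (Set ℕ)) : Prop :=
  ∀ f : List Bool → Set (Set ℕ),
    (∀ s t : List Bool, s <+: t → f s ⊆ f t) →
    (∀ s : List Bool, f s ⊆ I) →
    (∀ s : List Bool, ∀ A ∈ f s, ∀ B : Set ℕ, B ⊆ A → B ∈ f s) →
    (∀ s : List Bool, (⋃ t ∈ {t : List Bool | s <+: t}, f t) = I) →
    ∃ σ : ℕ → Bool, (⋃ k : ℕ, f (List.ofFn fun i : Fin k => σ i)) = I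

section NestedBalls

variable {X : Type*} [MetricSpace X]

/-- Either the radii tend to `0`, or they are eventually constant, and then so are the balls. -/
theorem exists_forall_mem_closedBall_of_eq_or_le_half [CompleteSpace X] {c : ℕ → X}
    {r : ℕ → ℝ} (hr : ∀ k, 0 ≤ r k)
    (hsub : ∀ k, closedBall (c (k + 1)) (r (k + 1)) ⊆ closedBall (c k) (r k))
    (hstep : ∀ k, (c (k + 1) = c k ∧ r (k + 1) = r k) ∨ r (k + 1) ≤ r k / 2) :
    ∃ x, ∀ k, x ∈ closedBall (c k) (r k) := by
  have hballs : Antitone fun k => closedBall (c k) (r k) := antitone_nat_of_succ_le hsub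
  have hradii : Antitone r := antitone_nat_of_succ_le fun k => by
    rcases hstep k with ⟨-, h⟩ | h
    · exact h.le
    · linarith [hr k]
  have hbdd : BddBelow (range r) := ⟨0, forall_mem_range.2 hr⟩
  rcases (le_ciInf hr).eq_or_lt with hL | hL
  · have hlim : Tendsto r atTop (𝓝 0) := hL ▸ tendsto_atTop_ciInf hradii hbdd
    have hdiam : Tendsto (fun k => diam (closedBall (c k) (r k))) atTop (𝓝 0) :=
      squeeze_zero (fun _ => diam_nonneg) (fun k => diam_closedBall (hr k))
        (by simpa using hlim.const_mul 2)
    obtain ⟨x, hx⟩ := nonempty_iInter_of_nonempty_biInter (fun _ => isClosed_closedBall)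
      (fun _ => isBounded_closedBall)
      (fun N => ⟨c N, mem_iInter₂.2 fun _ hk => hballs hk (mem_closedBall_self (hr N))⟩) hdiam
    exact ⟨x, mem_iInter.1 hx⟩
  · obtain ⟨K, hK⟩ := exists_lt_of_ciInf_lt (show ⨅ k, r k < 2 * ⨅ k, r k by linarith)
    have hconst : ∀ k, K ≤ k → c k = c K ∧ r k = r K := by
      intro k hk
      induction k, hk using Nat.le_induction with
      | base => exact ⟨rfl, rfl⟩
      | succ k hk ih =>
        rcases hstep k with h | h
        · exact ⟨h.1.trans ih.1, h.2.trans ih.2⟩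
        · linarith [hradii hk, ciInf_le hbdd (k + 1)]
    refine ⟨c K, fun k => hballs (le_max_left k K) ?_⟩
    show c K ∈ closedBall (c (max k K)) (r (max k K))
    obtain ⟨hc, hr'⟩ := hconst _ (le_max_right k K)
    rw [hc, hr']
    exact mem_closedBall_self (hr K)

theorem DenseRange.exists_closedBall_subset {u : ℕ → X} (hu : DenseRange u) {U : Set X}
    (hU : IsOpen U) (hne : U.Nonempty) (N : ℕ) {δ : ℝ} (hδ : 0 < δ) :
    ∃ i m, N ≤ m ∧ (2⁻¹ : ℝ) ^ m ≤ δ ∧ closedBall (u i) (2⁻¹ ^ m) ⊆ U := by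
  obtain ⟨x, hx⟩ := hne
  obtain ⟨ε, hε, hxU⟩ := isOpen_iff.1 hU x hx
  obtain ⟨i, hi⟩ := hu.exists_dist_lt x (half_pos hε)
  obtain ⟨m, hm⟩ :=
    exists_pow_lt_of_lt_one (lt_min (half_pos hε) hδ) (by norm_num : (2⁻¹ : ℝ) < 1)
  have hρ : (2⁻¹ : ℝ) ^ max m N ≤ (2⁻¹ : ℝ) ^ m :=
    pow_le_pow_of_le_one (by norm_num) (by norm_num) (le_max_left m N)
  refine ⟨i, max m N, le_max_right m N, hρ.trans (hm.le.trans (min_le_right _ _)), ?_⟩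
  refine (closedBall_subset_ball' ?_).trans hxU
  rw [dist_comm]
  linarith [min_le_left (ε / 2) δ]

end NestedBalls

/-- `pending` counts the `false`s read since the last `true`. -/
structure BallDecoder (X : Type*) where
  center : X
  radius : ℝ
  pending : ℕ

namespace BallDecoder

variable {X : Type*} [MetricSpace X]

/-- Realizes the surjection `ψ`: the block `0^z 1` codes the ball of centre `u i` and
radius `2⁻¹ ^ m`, where `(i, m) = Nat.unpair z`, which is accepted only if it lies in the
current ball and at most halves its radius. -/
noncomputable def step (u : ℕ → X) (p : BallDecoder X) : Bool → BallDecoder X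
  | false => ⟨p.center, p.radius, p.pending + 1⟩
  | true =>
    haveI := Classical.propDecidable
    if closedBall (u p.pending.unpair.1) (2⁻¹ ^ p.pending.unpair.2) ⊆
          closedBall p.center p.radius ∧ (2⁻¹ : ℝ) ^ p.pending.unpair.2 ≤ p.radius / 2
    then ⟨u p.pending.unpair.1, 2⁻¹ ^ p.pending.unpair.2, 0⟩
    else ⟨p.center, p.radius, 0⟩

noncomputable def run (u : ℕ → X) (s : List Bool) : BallDecoder X :=
  s.foldl (step u) ⟨u 0, 1, 0⟩

variable (u : ℕ → X)

theorem step_true_of_subset (p : BallDecoder X) {i m : ℕ} (hp : p.pending = Nat.pair i m)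
    (hsub : closedBall (u i) (2⁻¹ ^ m) ⊆ closedBall p.center p.radius)
    (hle : (2⁻¹ : ℝ) ^ m ≤ p.radius / 2) :
    step u p true = ⟨u i, 2⁻¹ ^ m, 0⟩ := by
  simp only [step]
  rw [if_pos (by simpa only [hp, Nat.unpair_pair] using And.intro hsub hle)]
  simp only [hp, Nat.unpair_pair]

theorem step_radius_pos (p : BallDecoder X) (b : Bool) (hp : 0 < p.radius) :
    0 < (step u p b).radius := by
  cases b
  · exact hp
  · simp only [step]
    split_ifs
    exacts [by positivity, hp]

theorem closedBall_step_subset (p : BallDecoder X) (b : Bool) :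
    closedBall (step u p b).center (step u p b).radius ⊆ closedBall p.center p.radius := by
  cases b
  · exact subset_rfl
  · simp only [step]
    split_ifs with h
    exacts [h.1, subset_rfl]

theorem step_eq_or_le_half (p : BallDecoder X) (b : Bool) :
    ((step u p b).center = p.center ∧ (step u p b).radius = p.radius) ∨
      (step u p b).radius ≤ p.radius / 2 := by
  cases b
  · exact Or.inl ⟨rfl, rfl⟩
  · simp only [step]
    split_ifs with h
    exacts [Or.inr h.2, Or.inl ⟨rfl, rfl⟩]

theorem foldl_replicate_false (p : BallDecoder X) (n : ℕ) :
    (List.replicate n false).foldl (step u) p = ⟨p.center, p.radius, p.pending + n⟩ := by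
  induction n generalizing p with
  | zero => rfl
  | succ n ih =>
    rw [List.replicate_succ, List.foldl_cons, ih]
    simp only [step]
    congr 1
    omega

theorem run_append (s t : List Bool) : run u (s ++ t) = t.foldl (step u) (run u s) :=
  List.foldl_append

theorem run_radius_pos (s : List Bool) : 0 < (run u s).radius := by
  suffices ∀ p : BallDecoder X, 0 < p.radius → 0 < (s.foldl (step u) p).radius from
    this _ one_pos
  induction s with
  | nil => exact fun _ hp => hp
  | cons b s ih => exact fun p hp => ih _ (step_radius_pos u p b hp)

theorem closedBall_run_subset_of_prefix {s t : List Bool} (h : s <+: t) :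
    closedBall (run u t).center (run u t).radius ⊆
      closedBall (run u s).center (run u s).radius := by
  obtain ⟨v, rfl⟩ := h
  rw [run_append]
  generalize run u s = p
  induction v generalizing p with
  | nil => exact subset_rfl
  | cons b v ih => exact (ih _).trans (closedBall_step_subset u p b)

theorem run_ofFn_succ (σ : ℕ → Bool) (k : ℕ) :
    run u (List.ofFn fun i : Fin (k + 1) => σ i) =
      step u (run u (List.ofFn fun i : Fin k => σ i)) (σ k) := by
  rw [List.ofFn_succ_last, run_append]
  rfl

theorem exists_prefix_closedBall_run_subset (hu : DenseRange u) (s : List Bool) {U : Set X}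
    (hU : IsOpen U) (hne : (ball (run u s).center (run u s).radius ∩ U).Nonempty) :
    ∃ t, s <+: t ∧ closedBall (run u t).center (run u t).radius ⊆ U := by
  obtain ⟨i, m, hm, hρ, hsub⟩ := hu.exists_closedBall_subset (isOpen_ball.inter hU) hne
    (run u s).pending (half_pos (run_radius_pos u s))
  set z := (run u s).pending
  have hpair : z + (Nat.pair i m - z) = Nat.pair i m := by
    have := Nat.right_le_pair i m
    omega
  refine ⟨s ++ (List.replicate (Nat.pair i m - z) false ++ [true]), ⟨_, rfl⟩, ?_⟩
  rw [run_append, List.foldl_append, foldl_replicate_false, List.foldl_cons, List.foldl_nil,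
    step_true_of_subset u ⟨_, _, _⟩ hpair
      (hsub.trans (inter_subset_left.trans ball_subset_closedBall)) hρ]
  exact hsub.trans inter_subset_right

theorem exists_forall_mem_closedBall_run [CompleteSpace X] (σ : ℕ → Bool) :
    ∃ x, ∀ k, x ∈ closedBall (run u (List.ofFn fun i : Fin k => σ i)).center
      (run u (List.ofFn fun i : Fin k => σ i)).radius := by
  refine exists_forall_mem_closedBall_of_eq_or_le_half (fun k => (run_radius_pos u _).le)
    (fun k => ?_) (fun k => ?_)
  · rw [run_ofFn_succ]
    exact closedBall_step_subset u _ _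
  · rw [run_ofFn_succ]
    exact step_eq_or_le_half u _ _

end BallDecoder

open BallDecoder in
theorem isBaireIdealFor_of_hasTreeProperty {I : Set (Set ℕ)}
    (hI : ∀ A ∈ I, ∀ B ⊆ A, B ∈ I) (htree : HasTreeProperty I) (X : Type*) [MetricSpace X]
    [CompleteSpace X] [SeparableSpace X] [Nonempty X] : IsBaireIdealFor I X := by
  intro F hF hmono hcov
  set u := denseSeq X
  set f : List Bool → Set (Set ℕ) := fun s =>
    {A | A ∈ I ∧ Disjoint (closedBall (run u s).center (run u s).radius) (F A)}
  have hcover : ∀ s, (⋃ t ∈ {t | s <+: t}, f t) = I := by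
    refine fun s => subset_antisymm (iUnion₂_subset fun t _ A hA => hA.1) fun A hA => ?_
    have hdense : Dense (closure (F A))ᶜ := interior_eq_empty_iff_dense_compl.1 (hF A hA)
    obtain ⟨t, hst, ht⟩ := exists_prefix_closedBall_run_subset u (denseRange_denseSeq X) s
      isClosed_closure.isOpen_compl
      (hdense.inter_open_nonempty _ isOpen_ball (nonempty_ball.2 (run_radius_pos u s)))
    exact mem_biUnion hst ⟨hA, (subset_compl_iff_disjoint_right.1 ht).mono_right subset_closure⟩
  obtain ⟨σ, hσ⟩ := htree f
    (fun s t hst A hA => ⟨hA.1, hA.2.mono_left (closedBall_run_subset_of_prefix u hst)⟩)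
    (fun s A hA => hA.1)
    (fun s A hA B hBA =>
      ⟨hI A hA.1 B hBA, hA.2.mono_right (hmono B (hI A hA.1 B hBA) A hA.1 hBA)⟩)
    hcover
  obtain ⟨x, hx⟩ := exists_forall_mem_closedBall_run u σ
  obtain ⟨A, hA, hxA⟩ := mem_iUnion₂.1 (hcov ▸ mem_univ x)
  obtain ⟨k, hk⟩ := mem_iUnion.1 (hσ ▸ hA : A ∈ ⋃ k, f (List.ofFn fun i : Fin k => σ i))
  exact hk.2.notMem_of_mem_left (hx k) hxA

theorem PiNat.exists_cylinder_subset {E : ℕ → Type*} [∀ n, TopologicalSpace (E n)]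
    [∀ n, DiscreteTopology (E n)] {U : Set (∀ n, E n)} (hU : IsOpen U) {x : ∀ n, E n}
    (hx : x ∈ U) : ∃ n, PiNat.cylinder x n ⊆ U := by
  obtain ⟨-, ⟨y, n, rfl⟩, hxy, hsub⟩ :=
    (PiNat.isTopologicalBasis_cylinders E).exists_subset_of_mem_open hx hU
  exact ⟨n, PiNat.mem_cylinder_iff_eq.1 hxy ▸ hsub⟩

theorem isClosed_setOf_forall_ofFn {α : Type*} [TopologicalSpace α] [DiscreteTopology α]
    (P : List α → Prop) :
    IsClosed {σ : ℕ → α | ∀ k, P (List.ofFn fun i : Fin k => σ i)} := by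
  rw [ofPred_forall]
  exact isClosed_iInter fun k => (isClosed_discrete {g : Fin k → α | P (List.ofFn g)}).preimage
    (f := fun (σ : ℕ → α) (i : Fin k) => σ i) (by fun_prop)

theorem exists_mem_cylinder_ofFn_eq {α : Type*} (σ : ℕ → α) {k : ℕ} {t : List α}
    (h : (List.ofFn fun i : Fin k => σ i) <+: t) :
    ∃ τ ∈ PiNat.cylinder σ k, (List.ofFn fun i : Fin t.length => τ i) = t := by
  have hk : k ≤ t.length := by simpa using h.length_le
  refine ⟨fun j => t.getD j (σ j), PiNat.mem_cylinder_iff.2 fun j hj => ?_, ?_⟩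
  · rw [List.getD_eq_getElem _ _ (hj.trans_le hk), ← h.getElem (by simpa using hj),
      List.getElem_ofFn]
  · conv_rhs => rw [← List.ofFn_getElem (xs := t)]
    exact congrArg List.ofFn (funext fun i => List.getD_eq_getElem _ _ i.isLt)

theorem hasTreeProperty_of_isBaireIdealFor {I : Set (Set ℕ)}
    (hB : IsBaireIdealFor I (ℕ → Bool)) : HasTreeProperty I := by
  intro f hmono hfI hhered hcover
  by_contra! hno
  set G : Set ℕ → Set (ℕ → Bool) := fun A =>
    {σ | ∀ k, A ∉ f (List.ofFn fun i : Fin k => σ i)}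
  refine hB G (fun A hA => ?_) (fun A _ B _ hAB σ hσ k hBk => hσ k (hhered _ B hBk A hAB)) ?_
  · rw [(isClosed_setOf_forall_ofFn fun s => A ∉ f s).isNowhereDense_iff,
      eq_empty_iff_forall_notMem]
    intro σ hσ
    obtain ⟨k, hk⟩ := PiNat.exists_cylinder_subset isOpen_interior hσ
    obtain ⟨t, hst, hAt⟩ := mem_iUnion₂.1 ((hcover _).symm ▸ hA)
    obtain ⟨τ, hτσ, hτt⟩ := exists_mem_cylinder_ofFn_eq σ hst
    exact interior_subset (hk hτσ) t.length (by rwa [hτt])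
  · refine eq_univ_of_forall fun σ => ?_
    obtain ⟨A, hA, hAσ⟩ :=
      exists_of_ssubset ((iUnion_subset fun k => hfI _).ssubset_of_ne (hno σ))
    exact mem_biUnion hA fun k hk => hAσ (mem_iUnion.2 ⟨k, hk⟩)

/-- For an ideal `I` on ℕ the following are equivalent: (1) `I` is a Baire ideal for
every Polish space; (2) `I` is a Baire ideal for the Cantor space `2^ℕ`; (3) the tree
property over `2^{<ℕ}` holds. -/
theorem stmt_7 (I : Set (Set ℕ)) (hI : IsIdealOn I) :
    ((∀ (X : Type) [TopologicalSpace X] [PolishSpace X] [Nonempty X],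
        IsBaireIdealFor I X) ↔ IsBaireIdealFor I (ℕ → Bool)) ∧
    (IsBaireIdealFor I (ℕ → Bool) ↔
      ∀ f : List Bool → Set (Set ℕ),
        (∀ s t : List Bool, s <+: t → f s ⊆ f t) →
        (∀ s : List Bool, f s ⊆ I) →
        (∀ s : List Bool, ∀ A ∈ f s, ∀ B : Set ℕ, B ⊆ A → B ∈ f s) →
        (∀ s : List Bool, (⋃ t ∈ {t : List Bool | s <+: t}, f t) = I) →
        ∃ σ : ℕ → Bool, (⋃ k : ℕ, f (List.ofFn fun i : Fin k => σ i)) = I) := by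
  have hered : ∀ A ∈ I, ∀ B ⊆ A, B ∈ I := hI.2.1
  have polish : ∀ (X : Type) [TopologicalSpace X] [PolishSpace X] [Nonempty X],
      HasTreeProperty I → IsBaireIdealFor I X := fun X _ _ _ htree =>
    letI := upgradeIsCompletelyMetrizable X
    isBaireIdealFor_of_hasTreeProperty hered htree X
  have : PolishSpace (ℕ → Bool) := {}
  exact ⟨⟨fun h => h (ℕ → Bool),
      fun h X _ _ _ => polish X (hasTreeProperty_of_isBaireIdealFor h)⟩,
    hasTreeProperty_of_isBaireIdealFor, polish (ℕ → Bool)⟩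
end

section
/- Let X be a complete metric space with |X| > 𝔠 and let {D_α : α < 𝔠} be a family of non-empty closed nowhere dense subsets of X. Then there exists a closed subset Ω ⊆ X with |Ω| ≤ 𝔠 such that for every α < 𝔠, the set D_α ∩ Ω is non-empty and nowhere dense in Ω. -/
/-!
Pick a point of each `D α` and close this set up under adding, for every point `p` and
every `α`, a sequence in the dense open set `(D α)ᶜ` converging to `p`; countably many rounds
keep its size at most `𝔠`, and its closure `Ω` has size at most `𝔠 ^ ℵ₀ = 𝔠`. Every point of
`Ω` is then a limit of points of `Ω \ D α`, so the closed set `D α ∩ Ω` has dense complement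
in `Ω`.
-/

open scoped ENNReal Cardinal

open Set Filter Topology Cardinal

universe u

theorem Cardinal.exists_superset_mk_le_forall_subset {X : Type u} {κ : Cardinal.{u}}
    (hκ : ℵ₀ ≤ κ) (f : X → Set X) (hf : ∀ x, #(f x) ≤ κ) {A : Set X} (hA : #A ≤ κ) :
    ∃ S, A ⊆ S ∧ #S ≤ κ ∧ ∀ x ∈ S, f x ⊆ S := by
  let F : ℕ → Set X := fun n ↦ Nat.rec A (fun _ s ↦ s ∪ ⋃ x ∈ s, f x) n
  have hF : ∀ n, #↥(F n) ≤ κ := by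
    intro n
    induction n with
    | zero => exact hA
    | succ n ih =>
      calc #↥(F (n + 1)) ≤ #↥(F n) + #↥(F n) * ⨆ x : F n, #↥(f x.1) :=
            (mk_union_le _ _).trans (add_le_add le_rfl (mk_biUnion_le _ _))
        _ ≤ κ + κ * κ := add_le_add ih (mul_le_mul' ih (ciSup_le' fun x ↦ hf x.1))
        _ = κ := by rw [mul_eq_self hκ, add_eq_self hκ]
  refine ⟨⋃ n, F n, subset_iUnion F 0, ?_, ?_⟩
  · have := mk_iUnion_le_lift F
    simp only [lift_uzero, mk_nat, lift_aleph0] at this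
    calc #↥(⋃ n, F n) ≤ ℵ₀ * ⨆ n, #↥(F n) := this
      _ ≤ κ * κ := mul_le_mul' hκ (ciSup_le' hF)
      _ = κ := mul_eq_self hκ
  · intro x hx
    obtain ⟨n, hn⟩ := mem_iUnion.1 hx
    exact (subset_biUnion_of_mem hn).trans <|
      subset_union_right.trans (subset_iUnion F (n + 1))

theorem Cardinal.mk_closure_le_pow_aleph0 {X : Type*} [TopologicalSpace X]
    [FrechetUrysohnSpace X] [T2Space X] (s : Set X) : #(closure s) ≤ #s ^ ℵ₀ := by
  have hseq : ∀ z : closure s, ∃ u : ℕ → s, Tendsto (fun n ↦ (u n : X)) atTop (𝓝 z) := by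
    rintro ⟨z, hz⟩
    obtain ⟨u, hus, hu⟩ := mem_closure_iff_seq_limit.1 hz
    exact ⟨fun n ↦ ⟨u n, hus n⟩, hu⟩
  choose u hu using hseq
  have hinj : Function.Injective u := fun z w hzw ↦
    Subtype.ext <| tendsto_nhds_unique (hu z) (hzw ▸ hu w)
  simpa using mk_le_of_injective hinj

theorem isNowhereDense_preimage_val_of_subset_closure_diff {X : Type*} [TopologicalSpace X]
    {Ω D : Set X} (hD : IsClosed D) (hΩ : Ω ⊆ closure (Ω \ D)) :
    IsNowhereDense (Subtype.val ⁻¹' D : Set Ω) := by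
  rw [(hD.preimage continuous_subtype_val).isNowhereDense_iff,
    interior_eq_empty_iff_dense_compl, Subtype.dense_iff, ← preimage_compl,
    Subtype.image_preimage_coe, ← sdiff_eq]
  exact hΩ

theorem stmt_8_general (X : Type) [MetricSpace X]
    (ι : Type) (hι : Cardinal.mk ι = Cardinal.continuum)
    (D : ι → Set X) (hne : ∀ α, (D α).Nonempty) (hcl : ∀ α, IsClosed (D α))
    (hnwd : ∀ α, IsNowhereDense (D α)) :
    ∃ Ω : Set X, IsClosed Ω ∧ Cardinal.mk Ω ≤ Cardinal.continuum ∧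
      ∀ α, (D α ∩ Ω).Nonempty ∧
        IsNowhereDense ((Subtype.val ⁻¹' D α : Set Ω)) := by
  have hdense : ∀ α, Dense (D α)ᶜ := fun α ↦
    interior_eq_empty_iff_dense_compl.1 ((hcl α).isNowhereDense_iff.1 (hnwd α))
  choose u hu_notMem hu_tendsto using
    fun (p : X) (α : ι) ↦ mem_closure_iff_seq_limit.1 (hdense α p)
  choose x hx using hne
  obtain ⟨S, hxS, hS_card, hS_stable⟩ :=
    exists_superset_mk_le_forall_subset aleph0_le_continuum
      (fun p ↦ range fun t : ι × ℕ ↦ u p t.1 t.2) (fun p ↦ mk_range_le.trans (by simp [hι]))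
      (mk_range_le.trans hι.le : #(range x) ≤ 𝔠)
  have hS_diff : ∀ α, S ⊆ closure (S \ D α) := fun α p hp ↦
    mem_closure_of_tendsto (hu_tendsto p α) (Eventually.of_forall fun n ↦
      ⟨hS_stable p hp ⟨(α, n), rfl⟩, hu_notMem p α n⟩)
  refine ⟨closure S, isClosed_closure, ?_,
    fun α ↦ ⟨⟨x α, hx α, subset_closure (hxS ⟨α, rfl⟩)⟩, ?_⟩⟩
  · calc #(closure S) ≤ #S ^ ℵ₀ := mk_closure_le_pow_aleph0 S
      _ ≤ 𝔠 ^ ℵ₀ := power_le_power_right hS_card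
      _ = 𝔠 := continuum_power_aleph0
  · refine isNowhereDense_preimage_val_of_subset_closure_diff (hcl α) ?_
    exact closure_minimal
      ((hS_diff α).trans (closure_mono (sdiff_subset_sdiff_left subset_closure))) isClosed_closure

/-- If `X` is a complete metric space with `|X| > 𝔠` and `{D_α : α < 𝔠}` are nonempty
closed nowhere dense subsets, there is a closed `Ω ⊆ X` with `|Ω| ≤ 𝔠` meeting each
`D_α` in a nonempty set which is nowhere dense in the subspace `Ω`. -/
theorem stmt_8 (X : Type) [MetricSpace X] [CompleteSpace X]
    (hX : Cardinal.continuum < Cardinal.mk X)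
    (ι : Type) (hι : Cardinal.mk ι = Cardinal.continuum)
    (D : ι → Set X) (hne : ∀ α, (D α).Nonempty) (hcl : ∀ α, IsClosed (D α))
    (hnwd : ∀ α, IsNowhereDense (D α)) :
    ∃ Ω : Set X, IsClosed Ω ∧ Cardinal.mk Ω ≤ Cardinal.continuum ∧
      ∀ α, (D α ∩ Ω).Nonempty ∧
        IsNowhereDense ((Subtype.val ⁻¹' D α : Set Ω)) :=
  stmt_8_general X ι hι D hne hcl hnwd
end

section
/- Let I be an ideal on ℕ. If I is a Baire ideal for D^ℕ where D is a discrete space with |D| = 𝔠, then I is a Baire ideal for every complete metric space X (of arbitrary weight): for every monotone F : I → NWD(X), ⋃_{A ∈ I} F(A) ≠ X. -/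
open scoped ENNReal Cardinal

section Aux

open Filter Metric

variable {X : Type*} [MetricSpace X]

/-- The "selective" sequence: accept a new point only if it is close to the current one. -/
noncomputable def yseq (u : ℕ → X) : ℕ → X
  | 0 => u 0
  | n + 1 => if dist (u (n + 1)) (yseq u n) < (1 / 4 : ℝ) ^ n then u (n + 1) else yseq u n

lemma yseq_zero (u : ℕ → X) : yseq u 0 = u 0 := rfl

lemma yseq_succ (u : ℕ → X) (n : ℕ) :
    yseq u (n + 1) =
      if dist (u (n + 1)) (yseq u n) < (1 / 4 : ℝ) ^ n then u (n + 1) else yseq u n := rfl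

lemma yseq_step (u : ℕ → X) (n : ℕ) :
    dist (yseq u n) (yseq u (n + 1)) ≤ 1 * (1 / 4 : ℝ) ^ n := by
  rw [yseq_succ]
  split
  · rw [dist_comm]; linarith
  · simp only [dist_self]; positivity

lemma ycauchy (u : ℕ → X) : CauchySeq (yseq u) :=
  cauchySeq_of_le_geometric (1 / 4 : ℝ) 1 (by norm_num) (yseq_step u)

/-- The limit of the selective sequence. -/
noncomputable def ylim [CompleteSpace X] (u : ℕ → X) : X :=
  (cauchySeq_tendsto_of_complete (ycauchy u)).choose

lemma ylim_spec [CompleteSpace X] (u : ℕ → X) :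
    Tendsto (yseq u) atTop (nhds (ylim u)) :=
  (cauchySeq_tendsto_of_complete (ycauchy u)).choose_spec

lemma ylim_dist [CompleteSpace X] (u : ℕ → X) (n : ℕ) :
    dist (yseq u n) (ylim u) ≤ 2 * (1 / 4 : ℝ) ^ n := by
  have h := dist_le_of_le_geometric_of_tendsto (1 / 4 : ℝ) 1 (by norm_num)
    (yseq_step u) (ylim_spec u) n
  have hp : (0 : ℝ) ≤ (1 / 4 : ℝ) ^ n := by positivity
  calc dist (yseq u n) (ylim u) ≤ 1 * (1 / 4 : ℝ) ^ n / (1 - 1 / 4) := h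
    _ ≤ 2 * (1 / 4 : ℝ) ^ n := by rw [one_mul]; rw [div_le_iff₀ (by norm_num)]; nlinarith

lemma yseq_agree {u v : ℕ → X} : ∀ {k n : ℕ}, k ≤ n → (∀ i ≤ n, u i = v i) →
    yseq u k = yseq v k := by
  intro k
  induction k with
  | zero => intro n _ h; simp only [yseq_zero]; exact h 0 (Nat.zero_le n)
  | succ k ih =>
    intro n hk h
    rw [yseq_succ, yseq_succ, h (k + 1) hk, ih (le_trans (Nat.le_succ k) hk) h]

lemma ylim_close [CompleteSpace X] {u v : ℕ → X} {n : ℕ} (h : ∀ i ≤ n, u i = v i) :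
    dist (ylim u) (ylim v) ≤ 4 * (1 / 4 : ℝ) ^ n := by
  have h1 := ylim_dist u n
  have h2 := ylim_dist v n
  have h3 : yseq u n = yseq v n := yseq_agree le_rfl h
  calc dist (ylim u) (ylim v) ≤ dist (ylim u) (yseq u n) + dist (yseq u n) (ylim v) :=
        dist_triangle _ _ _
    _ = dist (yseq u n) (ylim u) + dist (yseq v n) (ylim v) := by rw [dist_comm, h3]
    _ ≤ 2 * (1 / 4 : ℝ) ^ n + 2 * (1 / 4 : ℝ) ^ n := add_le_add h1 h2
    _ = 4 * (1 / 4 : ℝ) ^ n := by ring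

lemma yseq_mem_range (u : ℕ → X) (n : ℕ) : yseq u n ∈ Set.range u := by
  induction n with
  | zero => exact ⟨0, rfl⟩
  | succ n ih =>
    rw [yseq_succ]
    split
    · exact ⟨n + 1, rfl⟩
    · exact ih

lemma yseq_tail {u : ℕ → X} {n : ℕ} {x : X}
    (hx : dist x (yseq u n) < (1 / 4 : ℝ) ^ n) (hu : ∀ i, n < i → u i = x) :
    ∀ k, n < k → yseq u k = x := by
  intro k
  induction k with
  | zero => omega
  | succ k ih =>
    intro hk
    rcases Nat.lt_or_ge n k with h | h
    · have hk' := ih h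
      rw [yseq_succ, hu (k + 1) (by omega), hk']
      rw [if_pos (by simp only [dist_self]; positivity)]
    · have hkn : k = n := by omega
      subst hkn
      rw [yseq_succ, hu (k + 1) (by omega), if_pos hx]

lemma ylim_eq_of_tail [CompleteSpace X] {u : ℕ → X} {n : ℕ} {x : X}
    (hx : dist x (yseq u n) < (1 / 4 : ℝ) ^ n) (hu : ∀ i, n < i → u i = x) :
    ylim u = x := by
  have htail := yseq_tail hx hu
  have : Tendsto (yseq u) atTop (nhds x) := by
    refine Tendsto.congr' ?_ (tendsto_const_nhds : Tendsto (fun _ : ℕ => x) atTop (nhds x))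
    filter_upwards [Filter.eventually_atTop.2 ⟨n + 1, fun k hk => (htail k (by omega))⟩]
      with k hk
    exact hk.symm
  exact tendsto_nhds_unique (ylim_spec u) this

lemma cylinder_mem {D : Type*} [TopologicalSpace D] [DiscreteTopology D]
    {U : Set (ℕ → D)} (hU : IsOpen U) {σ : ℕ → D} (hσ : σ ∈ U) :
    ∃ n, ∀ τ : ℕ → D, (∀ i ≤ n, τ i = σ i) → τ ∈ U := by
  obtain ⟨F, u, hu, hsub⟩ := isOpen_pi_iff.1 hU σ hσ
  refine ⟨F.sup id, fun τ hτ => hsub ?_⟩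
  intro a ha
  rw [hτ a (Finset.le_sup (f := id) ha)]
  exact (hu a ha).2

lemma cylinder_nhds {D : Type*} [TopologicalSpace D] [DiscreteTopology D]
    (σ : ℕ → D) (n : ℕ) : {τ : ℕ → D | ∀ i ≤ n, τ i = σ i} ∈ nhds σ := by
  have heq : {τ : ℕ → D | ∀ i ≤ n, τ i = σ i} =
      ⋂ i ∈ Finset.range (n + 1), (fun τ : ℕ → D => τ i) ⁻¹' {σ i} := by
    ext τ
    simp [Nat.lt_succ_iff]
  rw [heq]
  refine (Filter.biInter_mem (Finset.finite_toSet _)).2 fun i _ => ?_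
  exact IsOpen.mem_nhds ((isOpen_discrete _).preimage (continuous_apply i)) rfl

end Aux

/-- If `I` is a Baire ideal for `D^ℕ` with `D` discrete of cardinality 𝔠, then `I` is a
Baire ideal for every (nonempty) complete metric space. -/
theorem stmt_9 (D : Type) [TopologicalSpace D] [DiscreteTopology D]
    (hD : Cardinal.mk D = Cardinal.continuum)
    (I : Set (Set ℕ)) (hI : IsIdealOn I)
    (hBaire : IsBaireIdealFor I (ℕ → D))
    (X : Type) [MetricSpace X] [CompleteSpace X] [Nonempty X] :
    IsBaireIdealFor I X := by
  classical
  intro F hnwd hmono hcov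
  obtain ⟨x₀⟩ := ‹Nonempty X›
  -- cardinality of I
  have hIc : Cardinal.mk (↥I) ≤ Cardinal.continuum := by
    refine (Cardinal.mk_set_le I).trans ?_
    rw [Cardinal.mk_set, Cardinal.mk_nat, Cardinal.two_power_aleph0]
  -- witnesses avoiding each nowhere dense closure
  have hwit : ∀ (x : X) (A : ↥I) (n : ℕ),
      ∃ z : X, dist z x < (1 / 4 : ℝ) ^ n ∧ z ∉ closure (F ↑A) := by
    intro x A n
    by_contra h
    push_neg at h
    have hball : Metric.ball x ((1 / 4 : ℝ) ^ n) ⊆ closure (F ↑A) := fun z hz =>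
      h z (by simpa [Metric.mem_ball] using hz)
    have hsub : Metric.ball x ((1 / 4 : ℝ) ^ n) ⊆ interior (closure (F ↑A)) :=
      interior_maximal hball Metric.isOpen_ball
    rw [hnwd ↑A A.2] at hsub
    exact hsub (Metric.mem_ball_self (by positivity))
  choose w hw1 hw2 using hwit
  -- the countable chain of sets
  set S : ℕ → Set X := fun k =>
    Nat.rec ({x₀} : Set X)
      (fun _ Sk => Sk ∪ (fun p : X × ↥I × ℕ => w p.1 p.2.1 p.2.2) ''
        (Sk ×ˢ (Set.univ : Set (↥I × ℕ)))) k with hSdef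
  have hS0 : S 0 = {x₀} := rfl
  have hSsucc : ∀ k, S (k + 1) = S k ∪ (fun p : X × ↥I × ℕ => w p.1 p.2.1 p.2.2) ''
      (S k ×ˢ (Set.univ : Set (↥I × ℕ))) := fun k => rfl
  set E : Set X := ⋃ k, S k with hEdef
  have hx₀E : x₀ ∈ E := Set.mem_iUnion.2 ⟨0, by rw [hS0]; exact rfl⟩
  -- witnesses of points of E stay in E
  have hwE : ∀ x ∈ E, ∀ (A : ↥I) (n : ℕ), w x A n ∈ E := by
    intro x hx A n
    obtain ⟨k, hk⟩ := Set.mem_iUnion.1 hx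
    refine Set.mem_iUnion.2 ⟨k + 1, ?_⟩
    rw [hSsucc k]
    exact Or.inr ⟨(x, A, n), ⟨hk, trivial⟩, rfl⟩
  -- cardinality of E
  have hScard : ∀ k, Cardinal.mk (S k) ≤ Cardinal.continuum := by
    intro k
    induction k with
    | zero =>
      rw [hS0, Cardinal.mk_singleton]
      exact le_trans (le_of_lt Cardinal.one_lt_aleph0) Cardinal.aleph0_le_continuum
    | succ k ih =>
      rw [hSsucc k]
      refine (Cardinal.mk_union_le _ _).trans ?_
      have himg : Cardinal.mk ((fun p : X × ↥I × ℕ => w p.1 p.2.1 p.2.2) ''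
          (S k ×ˢ (Set.univ : Set (↥I × ℕ)))) ≤ Cardinal.continuum := by
        refine Cardinal.mk_image_le.trans ?_
        rw [Cardinal.mk_setProd, Cardinal.mk_univ]
        have hprod : Cardinal.mk (↥I × ℕ) ≤ Cardinal.continuum := by
          rw [Cardinal.mk_prod, Cardinal.lift_id, Cardinal.lift_id, Cardinal.mk_nat]
          calc Cardinal.mk (↥I) * Cardinal.aleph0
              ≤ Cardinal.continuum * Cardinal.continuum :=
                mul_le_mul' hIc Cardinal.aleph0_le_continuum
            _ = Cardinal.continuum := Cardinal.continuum_mul_self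
        calc Cardinal.mk (S k) * Cardinal.mk (↥I × ℕ)
            ≤ Cardinal.continuum * Cardinal.continuum := mul_le_mul' ih hprod
          _ = Cardinal.continuum := Cardinal.continuum_mul_self
      calc Cardinal.mk (S k) +
            Cardinal.mk ((fun p : X × ↥I × ℕ => w p.1 p.2.1 p.2.2) ''
              (S k ×ˢ (Set.univ : Set (↥I × ℕ))))
          ≤ Cardinal.continuum + Cardinal.continuum := add_le_add ih himg
        _ = Cardinal.continuum := Cardinal.add_eq_self Cardinal.aleph0_le_continuum
  have hEcard : Cardinal.mk E ≤ Cardinal.continuum := by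
    refine (Cardinal.mk_iUnion_le S).trans ?_
    rw [Cardinal.mk_nat]
    calc Cardinal.aleph0 * ⨆ k, Cardinal.mk (S k)
        ≤ Cardinal.aleph0 * Cardinal.continuum :=
          mul_le_mul' le_rfl (ciSup_le' hScard)
      _ = Cardinal.continuum := Cardinal.aleph0_mul_continuum
  -- a map from D covering E
  haveI : Nonempty ↥E := ⟨⟨x₀, hx₀E⟩⟩
  obtain ⟨j⟩ := Cardinal.le_def (↥E) D |>.1 (hEcard.trans_eq hD.symm)
  set e : D → X := fun d => ((Function.invFun j d : ↥E) : X) with hedef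
  have heE : ∀ d, e d ∈ E := fun d => (Function.invFun j d).2
  have heSurj : ∀ z ∈ E, ∃ d, e d = z := by
    intro z hz
    obtain ⟨d, hd⟩ := Function.invFun_surjective j.injective ⟨z, hz⟩
    exact ⟨d, by rw [hedef]; simp [hd]⟩
  -- the transfer map
  set f : (ℕ → D) → X := fun σ => ylim (e ∘ σ) with hfdef
  have hfc : Continuous f := by
    rw [continuous_iff_continuousAt]
    intro σ
    rw [ContinuousAt, Metric.tendsto_nhds]
    intro ε hε
    obtain ⟨n, hn⟩ : ∃ n : ℕ, (1 / 4 : ℝ) ^ n < ε / 4 :=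
      exists_pow_lt_of_lt_one (by positivity) (by norm_num)
    filter_upwards [cylinder_nhds σ n] with τ hτ
    have hclose : dist (f τ) (f σ) ≤ 4 * (1 / 4 : ℝ) ^ n :=
      ylim_close (fun i hi => by simp only [Function.comp_apply, hτ i hi])
    linarith
  -- the family on D^ℕ
  set g : Set ℕ → Set (ℕ → D) := fun A => f ⁻¹' (closure (F A)) with hgdef
  -- key density: each basic cylinder contains a point avoiding `closure (F A)`
  have hkey : ∀ (σ : ℕ → D) (n : ℕ) (A : ↥I),
      ∃ τ : ℕ → D, (∀ i ≤ n, τ i = σ i) ∧ f τ ∉ closure (F ↑A) := by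
    intro σ n A
    have hyE : yseq (e ∘ σ) n ∈ E := by
      obtain ⟨k, hk⟩ := yseq_mem_range (e ∘ σ) n
      rw [← hk]
      exact heE (σ k)
    set y := yseq (e ∘ σ) n with hy
    obtain ⟨d, hd⟩ := heSurj (w y A n) (hwE y hyE A n)
    set τ : ℕ → D := fun i => if i ≤ n then σ i else d with hτdef
    have hagree : ∀ i ≤ n, τ i = σ i := fun i hi => if_pos hi
    have hagree' : ∀ i ≤ n, (e ∘ τ) i = (e ∘ σ) i := fun i hi => by
      simp only [Function.comp_apply, hagree i hi]
    have hyτ : yseq (e ∘ τ) n = y := yseq_agree le_rfl hagree'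
    have htail : ∀ i, n < i → (e ∘ τ) i = w y A n := by
      intro i hi
      simp only [Function.comp_apply, hτdef, if_neg (by omega : ¬ i ≤ n), hd]
    have hdist : dist (w y A n) (yseq (e ∘ τ) n) < (1 / 4 : ℝ) ^ n := by
      rw [hyτ]; exact hw1 y A n
    have hfτ : f τ = w y A n := ylim_eq_of_tail hdist htail
    exact ⟨τ, hagree, by rw [hfτ]; exact hw2 y A n⟩
  -- g is nowhere dense
  have hgnwd : ∀ A ∈ I, IsNowhereDense (g A) := by
    intro A hA
    have hclosed : IsClosed (g A) := isClosed_closure.preimage hfc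
    show interior (closure (g A)) = ∅
    rw [hclosed.closure_eq]
    rw [Set.eq_empty_iff_forall_notMem]
    intro σ hσ
    obtain ⟨n, hn⟩ := cylinder_mem isOpen_interior hσ
    obtain ⟨τ, hτ1, hτ2⟩ := hkey σ n ⟨A, hA⟩
    have h1 := interior_subset (hn τ hτ1)
    rw [hgdef] at h1
    exact hτ2 h1
  -- g is monotone
  have hgmono : ∀ A ∈ I, ∀ B ∈ I, A ⊆ B → g A ⊆ g B := by
    intro A hA B hB hAB
    exact Set.preimage_mono (closure_mono (hmono A hA B hB hAB))
  -- g covers D^ℕ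
  have hgcov : (⋃ A ∈ I, g A) = Set.univ := by
    rw [Set.eq_univ_iff_forall]
    intro σ
    have : f σ ∈ ⋃ A ∈ I, F A := hcov ▸ Set.mem_univ (f σ)
    obtain ⟨A, hA, hmem⟩ := Set.mem_iUnion₂.1 this
    exact Set.mem_iUnion₂.2 ⟨A, hA, subset_closure hmem⟩
  exact hBaire g hgnwd hgmono hgcov
end

section
/- Let I₀ be an ideal on ℕ, E = ℓ^∞/c₀(I₀), and for A ⊆ ℕ let F_A = {[x] ∈ E : there exists a representative x' of [x] with 0 ≤ x'_n ≤ χ_A(n) for all n}. Then for subsets A, B of ℕ belonging to an ideal I ⊇ I₀: A ∖ B ∈ I₀ if and only if F_A ⊆ F_B. Moreover each F_A is closed in E. -/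
open scoped ENNReal Cardinal

/-- The Banach space ℓ^∞ of bounded real sequences. -/
noncomputable abbrev LinfSeq : Type := lp (fun _ : ℕ => ℝ) (⊤ : ℝ≥0∞)

/-- The subspace `c₀(I₀)` of ℓ^∞: sequences all of whose `ε`-supports lie in `I₀`. -/
def c0Set (I₀ : Set (Set ℕ)) : Set LinfSeq :=
  {x : LinfSeq | ∀ ε : ℝ, 0 < ε → {n : ℕ | ε < |x n|} ∈ I₀}

/-- The clamp of `t` into `[0, a]` is the nearest point of that interval. -/
private lemma clamp_nearest (t a w : ℝ) (ha : 0 ≤ a) (hw0 : 0 ≤ w) (hwa : w ≤ a) :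
    |t - max 0 (min t a)| ≤ |t - w| := by
  rcases le_total t 0 with h | h
  · rw [min_eq_left (h.trans ha), max_eq_left h, abs_of_nonpos (by linarith)]
    calc -(t - 0) = -t := by ring
      _ ≤ w - t := by linarith
      _ ≤ |t - w| := by rw [abs_sub_comm]; exact le_abs_self _
  · rcases le_total t a with h' | h'
    · rw [min_eq_left h', max_eq_right h]
      simpa using abs_nonneg (t - w)
    · rw [min_eq_right h', max_eq_right ha, abs_of_nonneg (by linarith)]
      exact le_trans (by linarith) (le_abs_self _)

private lemma indicator_mem_Icc (A : Set ℕ) (n : ℕ) :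
    0 ≤ Set.indicator A (1 : ℕ → ℝ) n ∧ Set.indicator A (1 : ℕ → ℝ) n ≤ 1 := by
  by_cases hn : n ∈ A <;> simp [Set.indicator_of_mem, Set.indicator_of_notMem, hn]

/-- Bounded sequences are in ℓ^∞. -/
private lemma memℓp_top_of_bdd {f : ℕ → ℝ} {C : ℝ} (h : ∀ n, |f n| ≤ C) :
    Memℓp f (⊤ : ℝ≥0∞) :=
  memℓp_infty ⟨C, by rintro _ ⟨n, rfl⟩; simpa [Real.norm_eq_abs] using h n⟩

/-- In the quotient `E = ℓ^∞ / c₀(I₀)`, with `F_A` the set of classes having a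
representative `x` with `0 ≤ x ≤ χ_A`: each `F_A` is closed, and for `A, B` in an ideal
`I ⊇ I₀`, `A \ B ∈ I₀` iff `F_A ⊆ F_B`. -/
theorem stmt_12 (I₀ I : Set (Set ℕ)) (hI₀ : IsIdealOn I₀) (hI : IsIdealOn I)
    (hsub : I₀ ⊆ I)
    (S : Submodule ℝ LinfSeq) (hS : (S : Set LinfSeq) = c0Set I₀)
    (F : Set ℕ → Set (LinfSeq ⧸ S))
    (hF : ∀ A : Set ℕ, F A = {e : LinfSeq ⧸ S | ∃ x : LinfSeq,
      Submodule.Quotient.mk x = e ∧ ∀ n : ℕ, 0 ≤ x n ∧ x n ≤ Set.indicator A 1 n}) :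
    (∀ A : Set ℕ, IsClosed (F A)) ∧
      ∀ A ∈ I, ∀ B ∈ I, (A \ B ∈ I₀ ↔ F A ⊆ F B) := by
  have hdown : ∀ A ∈ I₀, ∀ B, B ⊆ A → B ∈ I₀ := hI₀.2.1
  have hSmem : ∀ x : LinfSeq, x ∈ S ↔ ∀ ε : ℝ, 0 < ε → {n : ℕ | ε < |x n|} ∈ I₀ := by
    intro x
    rw [← SetLike.mem_coe, hS]
    exact Iff.rfl
  constructor
  · -- each F A is closed
    intro A
    rw [← isOpen_compl_iff, Metric.isOpen_iff]
    intro e he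
    obtain ⟨x, rfl⟩ := Submodule.Quotient.mk_surjective S e
    set T : ℕ → ℝ := fun n => max 0 (min (x n) (Set.indicator A (1 : ℕ → ℝ) n)) with hTdef
    have hT0 : ∀ n, 0 ≤ T n := fun n => le_max_left _ _
    have hT1 : ∀ n, T n ≤ Set.indicator A (1 : ℕ → ℝ) n := fun n =>
      max_le (indicator_mem_Icc A n).1 (min_le_right _ _)
    have hTmem : Memℓp T (⊤ : ℝ≥0∞) := memℓp_top_of_bdd (C := 1) fun n => by
      rw [abs_of_nonneg (hT0 n)]
      exact (hT1 n).trans (indicator_mem_Icc A n).2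
    by_cases hc : ∀ ε : ℝ, 0 < ε → {n : ℕ | ε < |x n - T n|} ∈ I₀
    · exact absurd (by
        rw [hF]
        refine ⟨⟨T, hTmem⟩, ?_, fun n => ⟨hT0 n, hT1 n⟩⟩
        rw [Submodule.Quotient.eq, hSmem]
        intro ε hε
        have heq : {n : ℕ | ε < |((⟨T, hTmem⟩ : LinfSeq) - x) n|} = {n : ℕ | ε < |x n - T n|} := by
          ext n
          simp only [lp.coeFn_sub, Pi.sub_apply, Set.mem_setOf_eq, abs_sub_comm]
        rw [heq]
        exact hc ε hε) he
    · push_neg at hc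
      obtain ⟨ε, hε, hM⟩ := hc
      refine ⟨ε / 2, by linarith, fun f hf hfF => ?_⟩
      rw [hF] at hfF
      obtain ⟨y, rfl, hyb⟩ := hfF
      have hd : ‖(Submodule.Quotient.mk (y - x) : LinfSeq ⧸ S)‖ < ε / 2 := by
        rw [Submodule.Quotient.mk_sub]
        calc ‖(Submodule.Quotient.mk y : LinfSeq ⧸ S) - Submodule.Quotient.mk x‖
            = dist (Submodule.Quotient.mk y : LinfSeq ⧸ S) (Submodule.Quotient.mk x) :=
              (dist_eq_norm _ _).symm
          _ < ε / 2 := Metric.mem_ball.mp hf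
      obtain ⟨v, hv, hvn⟩ := Submodule.Quotient.norm_mk_lt
        (Submodule.Quotient.mk (y - x) : LinfSeq ⧸ S)
        (show (0 : ℝ) < ε / 2 - ‖(Submodule.Quotient.mk (y - x) : LinfSeq ⧸ S)‖ by linarith)
      have hvn' : ‖v‖ < ε / 2 := by linarith
      have hcS : v - (y - x) ∈ S := (Submodule.Quotient.eq S).mp hv
      have hcI : {n : ℕ | ε / 2 < |(v - (y - x)) n|} ∈ I₀ :=
        (hSmem _).mp hcS (ε / 2) (by linarith)
      apply hM
      apply hdown _ hcI
      intro n hn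
      simp only [Set.mem_setOf_eq] at hn ⊢
      have h1 : |x n - T n| ≤ |x n - y n| :=
        clamp_nearest (x n) _ (y n) (indicator_mem_Icc A n).1 (hyb n).1 (hyb n).2
      have h2 : |v n| ≤ ε / 2 := by
        have := lp.norm_apply_le_norm (ENNReal.top_ne_zero) v n
        rw [Real.norm_eq_abs] at this
        linarith
      have h3 : x n - y n = (v - (y - x)) n - v n := by
        simp only [lp.coeFn_sub, Pi.sub_apply]
        ring
      have h4 : |x n - y n| ≤ |(v - (y - x)) n| + |v n| := by
        rw [h3]; exact abs_sub _ _
      by_contra hcon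
      push_neg at hcon
      linarith [abs_nonneg ((v - (y - x)) n)]
  · -- the equivalence
    intro A _ B _
    constructor
    · -- A \ B ∈ I₀ → F A ⊆ F B
      intro hAB e heF
      rw [hF] at heF
      rw [hF]
      obtain ⟨x, hx, hxb⟩ := heF
      set y : ℕ → ℝ := fun n => Set.indicator B (fun k => x k) n with hydef
      have hymem : Memℓp y (⊤ : ℝ≥0∞) := memℓp_top_of_bdd (C := 1) fun n => by
        by_cases hn : n ∈ B
        · simp only [hydef, Set.indicator_of_mem hn]
          rw [abs_of_nonneg (hxb n).1]
          exact (hxb n).2.trans (indicator_mem_Icc A n).2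
        · simp [hydef, Set.indicator_of_notMem hn]
      refine ⟨⟨y, hymem⟩, ?_, ?_⟩
      · rw [← hx, Submodule.Quotient.eq, hSmem]
        intro ε hε
        apply hdown _ hAB
        intro n hn
        simp only [Set.mem_setOf_eq, lp.coeFn_sub, Pi.sub_apply] at hn
        have hn' : ε < |y n - x n| := hn
        by_cases hnB : n ∈ B
        · exfalso
          have hyx : y n = x n := by simp [hydef, Set.indicator_of_mem hnB]
          rw [hyx, sub_self, abs_zero] at hn'
          linarith
        · have hyn : y n = 0 := by simp [hydef, Set.indicator_of_notMem hnB]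
          rw [hyn] at hn'
          have hxn : |0 - x n| = x n := by
            rw [abs_of_nonpos (by linarith [(hxb n).1])]; ring
          rw [hxn] at hn'
          have hnA : n ∈ A := by
            by_contra hnA
            have hz : Set.indicator A (1 : ℕ → ℝ) n = 0 := Set.indicator_of_notMem hnA _
            have hle := (hxb n).2
            rw [hz] at hle
            linarith
          exact ⟨hnA, hnB⟩
      · intro n
        show 0 ≤ y n ∧ y n ≤ Set.indicator B 1 n
        by_cases hnB : n ∈ B
        · have hyx : y n = x n := by simp [hydef, Set.indicator_of_mem hnB]
          rw [hyx]
          exact ⟨(hxb n).1, le_trans ((hxb n).2.trans (indicator_mem_Icc A n).2)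
            (by simp [Set.indicator_of_mem hnB])⟩
        · have hyn : y n = 0 := by simp [hydef, Set.indicator_of_notMem hnB]
          rw [hyn]
          exact ⟨le_refl 0, (indicator_mem_Icc B n).1⟩
    · -- F A ⊆ F B → A \ B ∈ I₀
      intro hFF
      have hχmem : Memℓp (Set.indicator (A \ B) (1 : ℕ → ℝ)) (⊤ : ℝ≥0∞) :=
        memℓp_top_of_bdd (C := 1) fun n => by
          rw [abs_of_nonneg (indicator_mem_Icc (A \ B) n).1]
          exact (indicator_mem_Icc (A \ B) n).2
      set χ : LinfSeq := ⟨Set.indicator (A \ B) (1 : ℕ → ℝ), hχmem⟩ with hχdef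
      have h1 : (Submodule.Quotient.mk χ : LinfSeq ⧸ S) ∈ F A := by
        rw [hF]
        refine ⟨χ, rfl, fun n => ?_⟩
        have hval : χ n = Set.indicator (A \ B) (1 : ℕ → ℝ) n := rfl
        rw [hval]
        refine ⟨(indicator_mem_Icc (A \ B) n).1, ?_⟩
        by_cases hn : n ∈ A \ B
        · rw [Set.indicator_of_mem hn, Set.indicator_of_mem hn.1]
        · rw [Set.indicator_of_notMem hn]
          exact (indicator_mem_Icc A n).1
      have h2 := hFF h1
      rw [hF] at h2
      obtain ⟨y, hy, hyb⟩ := h2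
      have hcS : y - χ ∈ S := (Submodule.Quotient.eq S).mp hy
      have hI12 := (hSmem _).mp hcS (1 / 2) (by norm_num)
      apply hdown _ hI12
      intro n hn
      simp only [Set.mem_setOf_eq, lp.coeFn_sub, Pi.sub_apply]
      have hyn : y n = 0 := by
        have := (hyb n).2
        rw [Set.indicator_of_notMem hn.2] at this
        linarith [(hyb n).1]
      show 1 / 2 < |y n - Set.indicator (A \ B) (1 : ℕ → ℝ) n|
      rw [hyn, Set.indicator_of_mem hn]
      norm_num
end

section
/- Let I be the ideal on ℕ generated by an infinite almost disjoint family A of infinite subsets of ℕ (together with the finite sets). Then I is not a P(I₀)-ideal for any ideal I₀ on ℕ. -/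
open scoped ENNReal Cardinal

/-- `I` is a P(`I₀`)-ideal. -/
def IsPIdealMod (I I₀ : Set (Set ℕ)) : Prop :=
  (∀ A : ℕ → Set ℕ, (∀ n, A n ∈ I) → ∃ B ∈ I, ∀ n, A n \ B ∈ I₀) ∧
  (∀ A ∈ I, ∃ B ∈ I, B \ A ∉ I₀)

/-- `I` fails to be a Baire ideal: some complete metric space is covered by a monotone
family of nowhere dense sets indexed by `I`. -/
def FailsBaire (I : Set (Set ℕ)) : Prop :=
  ∃ (X : Type) (m : MetricSpace X),
    @CompleteSpace X m.toPseudoMetricSpace.toUniformSpace ∧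
    ∃ F : Set ℕ → Set X,
      (∀ A ∈ I,
        @IsNowhereDense X m.toPseudoMetricSpace.toUniformSpace.toTopologicalSpace (F A)) ∧
      (∀ A ∈ I, ∀ B ∈ I, A ⊆ B → F A ⊆ F B) ∧ (⋃ A ∈ I, F A) = Set.univ

/-- The ideal generated by a family `S` (together with the finite sets). -/
def genIdeal (S : Set (Set ℕ)) : Set (Set ℕ) :=
  {A | ∃ F : Finset (Set ℕ), ↑F ⊆ S ∧ ∃ C : Set ℕ, C.Finite ∧ A ⊆ (⋃ B ∈ F, B) ∪ C}

/-- The ideal generated by an infinite almost disjoint family of infinite subsets of ℕ is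
not a P(`I₀`)-ideal for any ideal `I₀`. -/
theorem stmt_15 (𝒜 : Set (Set ℕ)) (h𝒜 : 𝒜.Infinite) (hinf : ∀ A ∈ 𝒜, A.Infinite)
    (hAD : ∀ A ∈ 𝒜, ∀ B ∈ 𝒜, A ≠ B → (A ∩ B).Finite)
    (I : Set (Set ℕ)) (hgen : I = genIdeal 𝒜) :
    ∀ I₀ : Set (Set ℕ), IsIdealOn I₀ → ¬ IsPIdealMod I I₀ := by
  classical
  intro I₀ h₀ hP
  obtain ⟨h₀univ, h₀sub, h₀un, h₀fin⟩ := h₀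
  obtain ⟨hP1, hP2⟩ := hP
  -- finite unions stay in I₀
  have hIun : ∀ (F : Finset (Set ℕ)) (g : Set ℕ → Set ℕ),
      (∀ D ∈ F, g D ∈ I₀) → (⋃ D ∈ F, g D) ∈ I₀ := by
    intro F
    induction F using Finset.induction with
    | empty => intro g _; simpa using h₀fin ∅ Set.finite_empty
    | @insert a s ha ih =>
      intro g h
      rw [Finset.set_biUnion_insert]
      exact h₀un _ (h _ (Finset.mem_insert_self _ _)) _
        (ih g fun D hD => h D (Finset.mem_insert_of_mem hD))
  set G := {A | A ∈ 𝒜 ∧ A ∉ I₀} with hGdef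
  have hGinf : G.Infinite := by
    by_contra hfin
    rw [Set.not_infinite] at hfin
    have hUG : (⋃ A ∈ hfin.toFinset, A) ∈ I := by
      rw [hgen]
      refine ⟨hfin.toFinset, ?_, ∅, Set.finite_empty, by simp⟩
      intro A hA
      simp only [Finset.mem_coe, Set.Finite.mem_toFinset] at hA
      exact hA.1
    obtain ⟨B, hB, hBnot⟩ := hP2 _ hUG
    rw [hgen] at hB
    obtain ⟨F, hF𝒜, C, hC, hBsub⟩ := hB
    apply hBnot
    have hsub : B \ (⋃ A ∈ hfin.toFinset, A) ⊆
        (⋃ D ∈ F, (D \ (⋃ A ∈ hfin.toFinset, A))) ∪ C := by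
      intro x hx
      rcases hBsub hx.1 with h | h
      · simp only [Set.mem_iUnion] at h
        obtain ⟨D, hD, hxD⟩ := h
        left
        simp only [Set.mem_iUnion]
        exact ⟨D, hD, hxD, hx.2⟩
      · exact Or.inr h
    refine h₀sub _ (h₀un _ (hIun F _ ?_) _ (h₀fin C hC)) _ hsub
    intro D hD
    by_cases hDI : D ∈ I₀
    · exact h₀sub _ hDI _ Set.diff_subset
    · have hDG : D ∈ G := ⟨hF𝒜 hD, hDI⟩
      have : D \ (⋃ A ∈ hfin.toFinset, A) = ∅ := by
        rw [Set.diff_eq_empty]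
        intro x hx
        simp only [Set.mem_iUnion]
        exact ⟨D, hfin.mem_toFinset.2 hDG, hx⟩
      rw [this]
      exact h₀fin ∅ Set.finite_empty
  -- pick a sequence of distinct elements of G
  obtain f := hGinf.natEmbedding
  set A : ℕ → Set ℕ := fun n => (f n : Set ℕ) with hAdef
  have hAG : ∀ n, A n ∈ G := fun n => (f n).2
  have hAinj : Function.Injective A := fun m n h => f.injective (Subtype.ext h)
  have hAI : ∀ n, A n ∈ I := by
    intro n
    rw [hgen]
    refine ⟨{A n}, by simp [(hAG n).1], ∅, Set.finite_empty, by simp⟩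
  obtain ⟨B, hB, hABn⟩ := hP1 A hAI
  rw [hgen] at hB
  obtain ⟨F, hF𝒜, C, hC, hBsub⟩ := hB
  have : ∃ n, A n ∉ (F : Set (Set ℕ)) := by
    by_contra h
    push_neg at h
    exact (F.finite_toSet.subset (Set.range_subset_iff.2 h)).not_infinite
      (Set.infinite_range_of_injective hAinj)
  obtain ⟨n, hn⟩ := this
  have hfinAB : (A n ∩ B).Finite := by
    have hsub : A n ∩ B ⊆ (⋃ D ∈ F, (A n ∩ D)) ∪ (A n ∩ C) := by
      intro x hx
      rcases hBsub hx.2 with h | h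
      · simp only [Set.mem_iUnion] at h
        obtain ⟨D, hD, hxD⟩ := h
        exact Or.inl (Set.mem_biUnion hD ⟨hx.1, hxD⟩)
      · exact Or.inr ⟨hx.1, h⟩
    refine Set.Finite.subset (Set.Finite.union ?_ (hC.subset Set.inter_subset_right)) hsub
    refine Set.Finite.biUnion F.finite_toSet ?_
    intro D hD
    exact hAD (A n) (hAG n).1 D (hF𝒜 hD) (fun hEq => hn (hEq ▸ hD))
  have : A n ∈ I₀ := by
    have hsub : A n ⊆ (A n \ B) ∪ (A n ∩ B) := by
      intro x hx
      by_cases hxB : x ∈ B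
      · exact Or.inr ⟨hx, hxB⟩
      · exact Or.inl ⟨hx, hxB⟩
    exact h₀sub _ (h₀un _ (hABn n) _ (h₀fin _ hfinAB)) _ hsub
  exact (hAG n).2 this
end

section
/- Let I be an ideal on ℕ and suppose there is a family A ⊆ I with |A| = 𝔠 such that every B ∈ I contains only finitely many members of A (i.e., {A' ∈ A : A' ⊆ B} is finite). Then I is not a Baire ideal for the Cantor space 2^ℕ; equivalently, the tree characterization fails: indexing A = {A_σ : σ ∈ 2^ℕ} and setting f(s) = {B ∈ I : A_σ ⊄ B for all σ ⊒ s}, the map f is monotone, each f(s) is hereditary with ⋃_{t ⊒ s} f(t) = I, yet no σ ∈ 2^ℕ satisfies ⋃_k f(σ|_k) = I. -/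
open scoped ENNReal Cardinal

lemma open_infinite_aux {U : Set (ℕ → Bool)} (hU : IsOpen U) (hne : U.Nonempty) :
    U.Infinite := by
  obtain ⟨x, hx⟩ := hne
  rw [isOpen_pi_iff] at hU
  obtain ⟨F, u, hu, hsub⟩ := hU x hx
  have hinj : Set.InjOn (fun n => Function.update x n (!x n)) ((F : Set ℕ))ᶜ := by
    intro a _ b _ hab
    by_contra hne
    have := congrFun hab a
    simp [Function.update_apply, hne] at this
  have hmaps : ∀ n ∈ ((F : Set ℕ))ᶜ, Function.update x n (!x n) ∈ U := by
    intro n hn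
    apply hsub
    intro i hi
    have : i ≠ n := by rintro rfl; exact hn hi
    rw [Function.update_of_ne this]
    exact (hu i hi).2
  have hinf : (((F : Set ℕ))ᶜ).Infinite := (F.finite_toSet).infinite_compl
  exact Set.Infinite.mono (Set.image_subset_iff.mpr hmaps)
    (Set.Infinite.image hinj hinf)

lemma finite_isNowhereDense {s : Set (ℕ → Bool)} (hs : s.Finite) : IsNowhereDense s := by
  rw [(hs.isClosed).isNowhereDense_iff]
  by_contra h
  exact Set.not_infinite.mpr (hs.subset interior_subset)
    (open_infinite_aux isOpen_interior (Set.nonempty_iff_ne_empty.mpr h))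

/-- If `I` contains a family `𝒜` of cardinality 𝔠 such that each `B ∈ I` contains only
finitely many members of `𝒜`, then `I` is not a Baire ideal for the Cantor space. -/
theorem stmt_16 (I : Set (Set ℕ)) (hI : IsIdealOn I)
    (𝒜 : Set (Set ℕ)) (h𝒜 : 𝒜 ⊆ I) (hcard : Cardinal.mk 𝒜 = Cardinal.continuum)
    (hfin : ∀ B ∈ I, {A ∈ 𝒜 | A ⊆ B}.Finite) :
    ¬ IsBaireIdealFor I (ℕ → Bool) := by
  intro hB
  have hmk : Cardinal.mk (ℕ → Bool) = Cardinal.mk 𝒜 := by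
    rw [hcard, Cardinal.continuum]
    rw [show Cardinal.mk (ℕ → Bool) = Cardinal.mk Bool ^ Cardinal.mk ℕ from
      (Cardinal.power_def Bool ℕ).symm, Cardinal.mk_bool, Cardinal.mk_nat]
  obtain ⟨e⟩ := Cardinal.eq.mp hmk
  set f : Set ℕ → Set (ℕ → Bool) := fun B => {x | (e x : Set ℕ) ⊆ B} with hf
  have hnwd : ∀ B ∈ I, IsNowhereDense (f B) := by
    intro B hBI
    apply finite_isNowhereDense
    have h1 : ((Subtype.val : 𝒜 → Set ℕ) ⁻¹' {A ∈ 𝒜 | A ⊆ B}).Finite :=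
      (hfin B hBI).preimage Subtype.val_injective.injOn
    have h2 : f B = e ⁻¹' ((Subtype.val : 𝒜 → Set ℕ) ⁻¹' {A ∈ 𝒜 | A ⊆ B}) := by
      ext x
      simp only [hf, Set.mem_setOf_eq, Set.mem_preimage]
      exact ⟨fun h => ⟨(e x).2, h⟩, fun h => h.2⟩
    rw [h2]
    exact h1.preimage e.injective.injOn
  have hmono : ∀ A ∈ I, ∀ B ∈ I, A ⊆ B → f A ⊆ f B := by
    intro A _ B _ hAB x hx
    exact subset_trans hx hAB
  apply hB f hnwd hmono
  ext x
  simp only [Set.mem_iUnion, Set.mem_univ, iff_true]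
  exact ⟨(e x : Set ℕ), h𝒜 (e x).2, show (e x : Set ℕ) ⊆ (e x : Set ℕ) from subset_refl _⟩
end

section
/- Let I be an ideal on ℕ that can be written as a countable union of weakly bounded subsets (with respect to inclusion). Then for every monotone map f : I → K(ℕ^ℕ) into the compact subsets of Baire space, ⋃_{A ∈ I} f(A) ≠ ℕ^ℕ. -/
/-!
A weakly bounded family `B` has only finitely many values in each coordinate of
`⋃ A ∈ B, f A`: an infinite supply of new values would be witnessed by an infinite
subfamily, any infinite part of which has an upper bound `U ∈ I`, but `f U` is compact and
so takes finitely many values there. Hence each of the countably many sets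
`⋃ A ∈ 𝒞 n, f A` lies in a compact product of finite sets, while by the Baire category
theorem these cannot cover `ℕ^ℕ`, whose compact subsets have empty interior.
-/

open scoped ENNReal Cardinal

/-- `B` is a weakly bounded subset of the ideal `I` (ordered by inclusion): every
infinite subset of `B` contains an infinite subset with an upper bound in `I`. -/
def WeaklyBounded (I B : Set (Set ℕ)) : Prop :=
  ∀ C : Set (Set ℕ), C ⊆ B → C.Infinite →
    ∃ C' : Set (Set ℕ), C' ⊆ C ∧ C'.Infinite ∧ ∃ U ∈ I, ∀ A ∈ C', A ⊆ U

theorem WeaklyBounded.finite_biUnion {α : Type*} {I B : Set (Set ℕ)} (hB : WeaklyBounded I B)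
    (hBI : B ⊆ I) {φ : Set ℕ → Set α} (hfin : ∀ A ∈ I, (φ A).Finite)
    (hmono : ∀ A ∈ B, ∀ U ∈ I, A ⊆ U → φ A ⊆ φ U) : (⋃ A ∈ B, φ A).Finite := by
  by_contra hinf
  let x := Set.Infinite.natEmbedding _ hinf
  have hx : ∀ k, ∃ A ∈ B, (x k : α) ∈ φ A := fun k => by
    simpa only [Set.mem_iUnion, exists_prop] using (x k).2
  choose A hAB hxA using hx
  -- the points `x k` are distinct, so a finite union can only catch finitely many of them
  have hfew : ∀ C, (⋃ D ∈ C, φ D).Finite → {k | A k ∈ C}.Finite := fun C hC =>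
    (hC.preimage (Subtype.val_injective.comp x.injective).injOn).subset
      fun k hk => Set.mem_biUnion hk (hxA k)
  by_cases hR : (Set.range A).Finite
  · have hU : (⋃ D ∈ Set.range A, φ D).Finite :=
      hR.biUnion fun _ ⟨k, hk⟩ => hk ▸ hfin _ (hBI (hAB k))
    exact Set.infinite_univ (by simpa using hfew _ hU)
  · obtain ⟨C, hCR, hCinf, U, hUI, hCU⟩ := hB _ (Set.range_subset_iff.2 hAB) hR
    have hU : (⋃ D ∈ C, φ D).Finite := (hfin U hUI).subset <| Set.iUnion₂_subset fun D hD => by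
      obtain ⟨k, rfl⟩ := hCR hD
      exact hmono _ (hAB k) U hUI (hCU _ hD)
    refine hCinf (((hfew C hU).image A).subset fun D hD => ?_)
    obtain ⟨k, rfl⟩ := hCR hD
    exact ⟨k, hD, rfl⟩

theorem IsCompact.finite_image_eval {ι : Type*} {X : ι → Type*} [∀ i, TopologicalSpace (X i)]
    {K : Set (∀ i, X i)} (hK : IsCompact K) (j : ι) [DiscreteTopology (X j)] :
    (Function.eval j '' K).Finite :=
  (hK.image (continuous_apply j)).finite_of_discrete

theorem IsCompact.interior_eq_empty_of_discrete_pi {ι X : Type*} [Infinite ι] [Infinite X]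
    [TopologicalSpace X] [DiscreteTopology X] {K : Set (ι → X)} (hK : IsCompact K) :
    interior K = ∅ := by
  classical
  refine Set.eq_empty_of_forall_notMem fun x hx => ?_
  obtain ⟨F, u, hxu, hFK⟩ := isOpen_pi_iff.1 isOpen_interior x hx
  obtain ⟨j, hj⟩ := F.finite_toSet.infinite_compl.nonempty
  -- `K` contains every point agreeing with `x` off the free coordinate `j`
  have hall : Function.eval j '' K = Set.univ := Set.eq_univ_of_forall fun n =>
    ⟨Function.update x j n, interior_subset <| hFK fun i hi => by
      rw [Function.update_of_ne (ne_of_mem_of_not_mem hi hj)]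
      exact (hxu i hi).2, by simp⟩
  exact Set.infinite_univ (hall ▸ hK.finite_image_eval j)

theorem stmt_18_general (I : Set (Set ℕ))
    (𝒞 : ℕ → Set (Set ℕ)) (h𝒞 : ∀ n, 𝒞 n ⊆ I) (hwb : ∀ n, WeaklyBounded I (𝒞 n))
    (hcov : I = ⋃ n, 𝒞 n)
    (f : Set ℕ → Set (ℕ → ℕ)) (hcomp : ∀ A ∈ I, IsCompact (f A))
    (hmono : ∀ A ∈ I, ∀ B ∈ I, A ⊆ B → f A ⊆ f B) :
    (⋃ A ∈ I, f A) ≠ Set.univ := by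
  intro hcover
  set T : ℕ → Set (ℕ → ℕ) := fun n =>
    Set.univ.pi fun j => Function.eval j '' ⋃ A ∈ 𝒞 n, f A
  have hT : ∀ n, IsCompact (T n) := fun n => isCompact_univ_pi fun j => by
    simp only [Set.image_iUnion₂]
    exact ((hwb n).finite_biUnion (h𝒞 n) (fun A hA => (hcomp A hA).finite_image_eval j)
      fun A hA B hB hAB => Set.image_mono (hmono A (h𝒞 n hA) B hB hAB)).isCompact
  have hTcover : ⋃ n, T n = Set.univ := by
    refine Set.eq_univ_of_univ_subset (hcover ▸ Set.iUnion₂_subset fun A hA => ?_)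
    obtain ⟨n, hn⟩ := Set.mem_iUnion.1 (hcov ▸ hA)
    exact ((Set.subset_biUnion_of_mem hn).trans (Set.subset_pi_eval_image _ _)).trans
      (Set.subset_iUnion T n)
  obtain ⟨n, hn⟩ := nonempty_interior_of_iUnion_of_closed (fun n => (hT n).isClosed) hTcover
  exact hn.ne_empty (hT n).interior_eq_empty_of_discrete_pi

/-- If `I` is a countable union of weakly bounded subsets, then no monotone map from `I`
into the compact subsets of Baire space `ℕ^ℕ` has union all of `ℕ^ℕ`. -/
theorem stmt_18 (I : Set (Set ℕ)) (hI : IsIdealOn I)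
    (𝒞 : ℕ → Set (Set ℕ)) (h𝒞 : ∀ n, 𝒞 n ⊆ I) (hwb : ∀ n, WeaklyBounded I (𝒞 n))
    (hcov : I = ⋃ n, 𝒞 n)
    (f : Set ℕ → Set (ℕ → ℕ)) (hcomp : ∀ A ∈ I, IsCompact (f A))
    (hmono : ∀ A ∈ I, ∀ B ∈ I, A ⊆ B → f A ⊆ f B) :
    (⋃ A ∈ I, f A) ≠ Set.univ :=
  stmt_18_general I 𝒞 h𝒞 hwb hcov f hcomp hmono
end
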